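/- arXiv:1901.04728 — 10 statements merged into one kernel-verified Lean document; each statement's English description precedes it below -/
import Mathlib

section
/- Let T be a self-adjoint linear endomorphism of V. Then T ∘ T = 0 if and only if there exists a null vector l ∈ V such that T(w) = 0 for every w ∈ {l}⊥. -/
/-! Self-adjointness turns `T ∘ T = 0` into `g (T x) (T y) = g x (T (T y)) = 0`, so the range
of `T` is totally isotropic. In Lorentzian signature a totally isotropic subspace is at most a
null line `ℝ l` (a null vector with vanishing time coordinate is zero), and then
`g y (T w) = g (T y) w ∈ ℝ · g l w` shows that `T` kills `{l}⊥` by nondegeneracy. Conversely,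
`T l = 0` and `g l (T x) = g (T l) x = 0` put the range of `T` inside `{l}⊥`. -/

section SelfAdjoint

variable {R M N : Type*} [CommSemiring R] [AddCommMonoid M] [Module R M] [AddCommMonoid N]
  [Module R N] {g : M →ₗ[R] M →ₗ[R] N} {T : M →ₗ[R] M}

theorem apply_map_map_eq_zero_of_comp_self_eq_zero (hT : ∀ x y, g (T x) y = g x (T y))
    (hTT : T ∘ₗ T = 0) (x y : M) : g (T x) (T y) = 0 := by
  rw [hT, ← LinearMap.comp_apply T T, hTT, LinearMap.zero_apply, map_zero]

theorem comp_self_eq_zero_of_forall_orthogonal (hT : ∀ x y, g (T x) y = g x (T y)) {l : M}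
    (hll : g l l = 0) (hl : ∀ w, g l w = 0 → T w = 0) : T ∘ₗ T = 0 := by
  have hTl : T l = 0 := hl l hll
  ext x
  exact hl (T x) (by rw [← hT, hTl, map_zero, LinearMap.zero_apply])

end SelfAdjoint

section DiagonalBasis

variable {V ι : Type*} [AddCommGroup V] [Module ℝ V] [DecidableEq ι]
  {g : V →ₗ[ℝ] V →ₗ[ℝ] ℝ} {b : Module.Basis ι ℝ V} {η : ι → ℝ}

theorem apply_add_basis_self (hb : ∀ i j, g (b i) (b j) = if i = j then η i else 0)
    {i j : ι} (hij : i ≠ j) : g (b i + b j) (b i + b j) = η i + η j := by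
  simp [hb, hij, hij.symm]

variable [Fintype ι]

theorem apply_eq_sum_mul_repr (hb : ∀ i j, g (b i) (b j) = if i = j then η i else 0)
    (x y : V) : g x y = ∑ i, η i * b.repr x i * b.repr y i := by
  conv_lhs => rw [← b.sum_repr x, ← b.sum_repr y]
  simp only [map_sum, map_smul, LinearMap.coe_sum, Finset.sum_apply, LinearMap.smul_apply,
    smul_eq_mul, hb, mul_ite, mul_zero, Finset.sum_ite_eq', Finset.mem_univ, if_true]
  exact Finset.sum_congr rfl fun i _ => by ring

theorem apply_basis_left (hb : ∀ i j, g (b i) (b j) = if i = j then η i else 0)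
    (j : ι) (x : V) : g (b j) x = η j * b.repr x j := by
  simp [apply_eq_sum_mul_repr hb, Finsupp.single_apply]

theorem eq_zero_of_forall_apply_left_eq_zero
    (hb : ∀ i j, g (b i) (b j) = if i = j then η i else 0) (hη : ∀ i, η i ≠ 0) {x : V}
    (hx : ∀ y, g y x = 0) : x = 0 := by
  refine b.ext_elem fun j => ?_
  have := hx (b j)
  rw [apply_basis_left hb] at this
  simpa [hη j] using this

theorem eq_zero_of_isotropic_of_repr_eq_zero
    (hb : ∀ i j, g (b i) (b j) = if i = j then η i else 0) {i₀ : ι}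
    (hη : ∀ i ≠ i₀, 0 < η i) {z : V} (hz : g z z = 0) (hz₀ : b.repr z i₀ = 0) : z = 0 := by
  have hterm : ∀ i ∈ Finset.univ, 0 ≤ η i * b.repr z i * b.repr z i := by
    intro i _
    rcases eq_or_ne i i₀ with rfl | hi
    · simp [hz₀]
    · rw [mul_assoc]
      exact mul_nonneg (hη i hi).le (mul_self_nonneg _)
  rw [apply_eq_sum_mul_repr hb, Finset.sum_eq_zero_iff_of_nonneg hterm] at hz
  refine b.ext_elem fun i => ?_
  rcases eq_or_ne i i₀ with rfl | hi
  · simpa using hz₀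
  · have := hz i (Finset.mem_univ i)
    rw [mul_assoc, mul_eq_zero, mul_self_eq_zero] at this
    simpa [(hη i hi).ne'] using this

theorem exists_eq_smul_of_isotropic
    (hb : ∀ i j, g (b i) (b j) = if i = j then η i else 0) {i₀ : ι}
    (hη : ∀ i ≠ i₀, 0 < η i) {u v : V} (hu : u ≠ 0) (huu : g u u = 0) (hvv : g v v = 0)
    (huv : g u v = 0) (hvu : g v u = 0) : ∃ c : ℝ, v = c • u := by
  have hu₀ : b.repr u i₀ ≠ 0 := fun h => hu (eq_zero_of_isotropic_of_repr_eq_zero hb hη huu h)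
  refine ⟨b.repr v i₀ / b.repr u i₀, sub_eq_zero.mp ?_⟩
  apply eq_zero_of_isotropic_of_repr_eq_zero hb hη
  · simp [huu, hvv, huv, hvu]
  · simp [hu₀]

theorem map_eq_zero_of_orthogonal_of_comp_self_eq_zero
    (hb : ∀ i j, g (b i) (b j) = if i = j then η i else 0) {i₀ : ι}
    (hη : ∀ i ≠ i₀, 0 < η i) (hη₀ : η i₀ ≠ 0) {T : V →ₗ[ℝ] V}
    (hT : ∀ x y, g (T x) y = g x (T y)) (hTT : T ∘ₗ T = 0) {x : V} (hx : T x ≠ 0) {w : V}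
    (hw : g (T x) w = 0) : T w = 0 := by
  have hnull := apply_map_map_eq_zero_of_comp_self_eq_zero hT hTT
  have hη_ne : ∀ i, η i ≠ 0 := fun i => by
    rcases eq_or_ne i i₀ with rfl | hi
    exacts [hη₀, (hη i hi).ne']
  refine eq_zero_of_forall_apply_left_eq_zero hb hη_ne fun y => ?_
  obtain ⟨c, hc⟩ := exists_eq_smul_of_isotropic hb hη hx (hnull x x) (hnull y y)
    (hnull x y) (hnull y x)
  rw [← hT, hc, map_smul, LinearMap.smul_apply, hw, smul_zero]

end DiagonalBasis

theorem stmt0_general {V : Type*} [AddCommGroup V] [Module ℝ V]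
    {n : ℕ} (hn : 2 ≤ n)
    (g : V →ₗ[ℝ] V →ₗ[ℝ] ℝ)
    (b : Module.Basis (Fin n) ℝ V)
    (hb : ∀ i j : Fin n, g (b i) (b j) =
      if i = j then (if (i : ℕ) = 0 then (-1 : ℝ) else 1) else 0)
    (T : V →ₗ[ℝ] V)
    (hT : ∀ x y : V, g (T x) y = g x (T y)) :
    T ∘ₗ T = 0 ↔
      ∃ l : V, l ≠ 0 ∧ g l l = 0 ∧ ∀ w : V, g l w = 0 → T w = 0 := by
  let i₀ : Fin n := ⟨0, by omega⟩
  let i₁ : Fin n := ⟨1, by omega⟩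
  have hη : ∀ i ≠ i₀, 0 < if (i : ℕ) = 0 then (-1 : ℝ) else 1 := fun i hi => by
    simp [show (i : ℕ) ≠ 0 from fun h => hi (Fin.ext h)]
  refine ⟨fun hTT => ?_, fun ⟨l, _, hll, hl⟩ => comp_self_eq_zero_of_forall_orthogonal hT hll hl⟩
  by_cases hT₀ : ∀ x, T x = 0
  · have h₀₁ : i₀ ≠ i₁ := by simp [i₀, i₁, Fin.ext_iff]
    refine ⟨b i₀ + b i₁, fun h => ?_, ?_, fun w _ => hT₀ w⟩
    · simpa [Finsupp.single_apply, h₀₁] using congrArg (b.repr · i₁) h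
    · rw [apply_add_basis_self hb h₀₁]
      simp [i₀, i₁]
  · obtain ⟨x, hx⟩ := not_forall.mp hT₀
    exact ⟨T x, hx, apply_map_map_eq_zero_of_comp_self_eq_zero hT hTT x x,
      fun w => map_eq_zero_of_orthogonal_of_comp_self_eq_zero hb hη (by simp [i₀]) hT hTT hx⟩

/-- Let `V` be a finite-dimensional real vector space with a nondegenerate
symmetric bilinear form `g` of Lorentzian signature (witnessed by an orthonormal-type basis
`b` with `g (b 0) (b 0) = -1` and `g (b i) (b i) = 1` otherwise).  For a self-adjoint
endomorphism `T`, `T ∘ T = 0` iff there is a null vector `l` with `T w = 0` for all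
`w ∈ {l}⊥`. -/
theorem stmt0 {V : Type*} [AddCommGroup V] [Module ℝ V]
    {n : ℕ} (hn : 2 ≤ n)
    (g : V →ₗ[ℝ] V →ₗ[ℝ] ℝ)
    (hg_symm : ∀ x y : V, g x y = g y x)
    (b : Module.Basis (Fin n) ℝ V)
    (hb : ∀ i j : Fin n, g (b i) (b j) =
      if i = j then (if (i : ℕ) = 0 then (-1 : ℝ) else 1) else 0)
    (T : V →ₗ[ℝ] V)
    (hT : ∀ x y : V, g (T x) y = g x (T y)) :
    T ∘ₗ T = 0 ↔
      ∃ l : V, l ≠ 0 ∧ g l l = 0 ∧ ∀ w : V, g l w = 0 → T w = 0 :=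
  stmt0_general hn g b hb T hT
end

section
/- Let T be a self-adjoint linear endomorphism of V. Then T ∘ T ∘ T = 0 if and only if there exists a null vector l ∈ V such that the range of T is contained in {l}⊥ and T maps {l}⊥ into the line ℝ·l spanned by l. -/
/-!
Because `b 0` is the only timelike basis vector, `g` is positive definite on the hyperplane
`x₀ = 0`. Hence an isotropic vector orthogonal to a nonzero isotropic `l` is a multiple of `l`:
subtracting the multiple of `l` with the same `0`-th coordinate leaves an isotropic vector in
that hyperplane.

If `T³ = 0`, let `l` be a nonzero vector of the range of `T²`, or of `T` when `T² = 0`.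
Self-adjointness makes `l` isotropic and orthogonal to the range of `T`, and for `w ⟂ l` the
vector `T w` is isotropic (once `T² w ∈ ℝ l` is known) and orthogonal to `l`, hence in `ℝ l`.
Conversely, nondegeneracy forces `T l = 0`, and `T²` maps everything into `ℝ l`.
-/

open Module

lemma LinearMap.IsSelfAdjoint.apply_apply_eq_zero {R M : Type*} [CommSemiring R]
    [AddCommMonoid M] [Module R M] {B : LinearMap.BilinForm R M} {T : M →ₗ[R] M}
    (hT : LinearMap.IsSelfAdjoint B T) (hTT : ∀ x, T (T x) = 0) (x y : M) :
    B (T x) (T y) = 0 := by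
  rw [hT, hTT, map_zero]

lemma LinearMap.IsSelfAdjoint.comp_comp_eq_zero {R M : Type*} [CommSemiring R]
    [AddCommMonoid M] [Module R M] {B : LinearMap.BilinForm R M} {T : M →ₗ[R] M}
    (hB : B.SeparatingLeft) (hT : LinearMap.IsSelfAdjoint B T) {l : M} (hlT : ∀ x, B l (T x) = 0)
    (hTl : ∀ w, B l w = 0 → ∃ c : R, T w = c • l) : T ∘ₗ T ∘ₗ T = 0 := by
  have hTl0 : T l = 0 := hB _ fun x => (hT l x).trans (hlT x)
  ext x
  obtain ⟨c, hc⟩ := hTl (T x) (hlT x)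
  simp [hc, hTl0]

section Lorentzian

variable {V : Type*} [AddCommGroup V] [Module ℝ V] {n : ℕ}

def lorentzSign (i : Fin n) : ℝ := if (i : ℕ) = 0 then -1 else 1

lemma lorentzSign_ne_zero (i : Fin n) : lorentzSign i ≠ 0 := by
  unfold lorentzSign; split <;> norm_num

lemma sum_lorentzSign_mul_self_eq_sum_sq {d : Fin n → ℝ} (hn : 0 < n) (hd : d ⟨0, hn⟩ = 0) :
    ∑ i, lorentzSign i * d i * d i = ∑ i, d i ^ 2 := by
  refine Finset.sum_congr rfl fun i _ => ?_
  by_cases hi : (i : ℕ) = 0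
  · obtain rfl : i = ⟨0, hn⟩ := Fin.ext hi
    simp [hd]
  · simp [lorentzSign, hi, sq]

def IsLorentzOrthonormal (g : LinearMap.BilinForm ℝ V) (b : Basis (Fin n) ℝ V) : Prop :=
  ∀ i j, g (b i) (b j) = if i = j then lorentzSign i else 0

namespace IsLorentzOrthonormal

variable {g : LinearMap.BilinForm ℝ V} {b : Basis (Fin n) ℝ V} {T : V →ₗ[ℝ] V}

lemma isSymm (hb : IsLorentzOrthonormal g b) : g.IsSymm :=
  (LinearMap.BilinForm.isSymm_iff_basis b).2 fun i j => by
    rw [hb, hb]; split_ifs <;> simp_all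

lemma apply_basis (hb : IsLorentzOrthonormal g b) (x : V) (i : Fin n) :
    g x (b i) = lorentzSign i * b.repr x i := by
  conv_lhs => rw [← b.sum_repr x]
  simp only [map_sum, map_smul, LinearMap.sum_apply, LinearMap.smul_apply, hb _ i, smul_eq_mul,
    mul_ite, mul_zero, Finset.sum_ite_eq', Finset.mem_univ, if_true]
  exact mul_comm _ _

lemma apply_eq_sum (hb : IsLorentzOrthonormal g b) (x y : V) :
    g x y = ∑ i, lorentzSign i * b.repr x i * b.repr y i := by
  conv_lhs => rw [← b.sum_repr y]
  simp only [map_sum, map_smul, hb.apply_basis, smul_eq_mul]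
  exact Finset.sum_congr rfl fun i _ => by ring

lemma separatingLeft (hb : IsLorentzOrthonormal g b) : g.SeparatingLeft := fun x hx =>
  b.repr.injective <| Finsupp.ext fun i => by
    simpa [hb.apply_basis, lorentzSign_ne_zero] using hx (b i)

lemma eq_zero_of_apply_self_eq_zero (hb : IsLorentzOrthonormal g b) (hn : 0 < n) {x : V}
    (hxx : g x x = 0) (hx0 : b.repr x ⟨0, hn⟩ = 0) : x = 0 := by
  rw [hb.apply_eq_sum, sum_lorentzSign_mul_self_eq_sum_sq hn hx0,
    Finset.sum_eq_zero_iff_of_nonneg fun i _ => sq_nonneg _] at hxx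
  exact b.repr.injective <| Finsupp.ext fun i => by simpa using hxx i (Finset.mem_univ i)

lemma exists_eq_smul_of_isOrtho_of_apply_self_eq_zero (hb : IsLorentzOrthonormal g b)
    {l w : V} (hl : l ≠ 0) (hll : g l l = 0) (hlw : g l w = 0) (hww : g w w = 0) :
    ∃ c : ℝ, w = c • l := by
  have : Nontrivial V := nontrivial_of_ne l 0 hl
  have hn : 0 < n := Fin.pos_iff_nonempty.2 b.index_nonempty
  have hl0 : b.repr l ⟨0, hn⟩ ≠ 0 := fun h => hl (hb.eq_zero_of_apply_self_eq_zero hn hll h)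
  set c := b.repr w ⟨0, hn⟩ / b.repr l ⟨0, hn⟩
  refine ⟨c, sub_eq_zero.1 (hb.eq_zero_of_apply_self_eq_zero hn ?_ ?_)⟩
  · have hwl : g w l = 0 := by rw [hb.isSymm.eq, hlw]
    simp [hll, hlw, hwl, hww]
  · simp [c, hl0]

lemma exists_isotropic (hb : IsLorentzOrthonormal g b) (hn : 2 ≤ n) :
    ∃ l : V, l ≠ 0 ∧ g l l = 0 := by
  let i₀ : Fin n := ⟨0, by omega⟩
  let i₁ : Fin n := ⟨1, by omega⟩
  have h01 : i₀ ≠ i₁ := by simp [i₀, i₁, Fin.ext_iff]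
  refine ⟨b i₀ + b i₁, fun h => ?_, ?_⟩
  · simpa [Finsupp.single_apply, h01.symm] using congrArg (b.repr · i₀) h
  · simp [hb i₀ i₁, hb i₁ i₀, hb i₀ i₀, hb i₁ i₁, h01, lorentzSign, i₀, i₁]

lemma exists_apply_eq_smul_of_isOrtho_range (hb : IsLorentzOrthonormal g b)
    (hT : LinearMap.IsSelfAdjoint g T) {l w : V} (hl : l ≠ 0) (hll : g l l = 0)
    (hlT : ∀ x, g l (T x) = 0) (hw : g (T (T w)) w = 0) : ∃ c : ℝ, T w = c • l :=
  hb.exists_eq_smul_of_isOrtho_of_apply_self_eq_zero hl hll (hlT w)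
    (by rw [hT, hb.isSymm.eq, hw])

lemma exists_isotropic_of_comp_comp_eq_zero (hb : IsLorentzOrthonormal g b) (hn : 2 ≤ n)
    (hT : LinearMap.IsSelfAdjoint g T) (hT3 : T ∘ₗ T ∘ₗ T = 0) :
    ∃ l : V, l ≠ 0 ∧ g l l = 0 ∧ (∀ x, g l (T x) = 0) ∧
      ∀ w, g l w = 0 → ∃ c : ℝ, T w = c • l := by
  have hTTT (x : V) : T (T (T x)) = 0 := LinearMap.congr_fun hT3 x
  by_cases hT2 : ∀ x, T (T x) = 0
  · by_cases hT0 : ∀ x, T x = 0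
    · obtain ⟨l, hl, hll⟩ := hb.exists_isotropic hn
      exact ⟨l, hl, hll, by simp [hT0], fun w _ => ⟨0, by simp [hT0]⟩⟩
    obtain ⟨v, hv⟩ := not_forall.1 hT0
    have hiso := hT.apply_apply_eq_zero hT2
    exact ⟨T v, hv, hiso v v, hiso v, fun w _ =>
      hb.exists_apply_eq_smul_of_isOrtho_range hT hv (hiso v v) (hiso v) (by simp [hT2])⟩
  obtain ⟨v, hv⟩ := not_forall.1 hT2
  have hTT : LinearMap.IsSelfAdjoint g (T ∘ₗ T) := hT.comp hT
  have hiso := hTT.apply_apply_eq_zero fun x => by simp [hTTT]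
  have hlT (x : V) : g (T (T v)) (T x) = 0 := by rw [hT, hT, hTTT, map_zero]
  refine ⟨T (T v), hv, hiso v v, hlT, fun w hw =>
    hb.exists_apply_eq_smul_of_isOrtho_range hT hv (hiso v v) hlT ?_⟩
  obtain ⟨c, hc⟩ := hb.exists_apply_eq_smul_of_isOrtho_range hTT hv (hiso v v) (hiso v)
    (by simp [hTTT])
  simp only [LinearMap.comp_apply] at hc
  rw [hc, LinearMap.map_smul₂, hw, smul_zero]

end IsLorentzOrthonormal

end Lorentzian

theorem stmt1_general {V : Type*} [AddCommGroup V] [Module ℝ V]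
    {n : ℕ} (hn : 2 ≤ n)
    (g : V →ₗ[ℝ] V →ₗ[ℝ] ℝ)
    (b : Module.Basis (Fin n) ℝ V)
    (hb : ∀ i j : Fin n, g (b i) (b j) =
      if i = j then (if (i : ℕ) = 0 then (-1 : ℝ) else 1) else 0)
    (T : V →ₗ[ℝ] V)
    (hT : ∀ x y : V, g (T x) y = g x (T y)) :
    T ∘ₗ T ∘ₗ T = 0 ↔
      ∃ l : V, l ≠ 0 ∧ g l l = 0 ∧ (∀ x : V, g l (T x) = 0) ∧
        (∀ w : V, g l w = 0 → ∃ c : ℝ, T w = c • l) := by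
  have hg : IsLorentzOrthonormal g b := hb
  exact ⟨hg.exists_isotropic_of_comp_comp_eq_zero hn hT, fun ⟨_, _, _, hlT, hTl⟩ =>
    LinearMap.IsSelfAdjoint.comp_comp_eq_zero hg.separatingLeft hT hlT hTl⟩

/-- For a self-adjoint endomorphism `T` of a Lorentzian vector space `(V, g)`,
`T ∘ T ∘ T = 0` iff there exists a null vector `l` such that the range of `T` is contained in
`{l}⊥` and `T` maps `{l}⊥` into the line `ℝ • l`. -/
theorem stmt1 {V : Type*} [AddCommGroup V] [Module ℝ V]
    {n : ℕ} (hn : 2 ≤ n)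
    (g : V →ₗ[ℝ] V →ₗ[ℝ] ℝ)
    (hg_symm : ∀ x y : V, g x y = g y x)
    (b : Module.Basis (Fin n) ℝ V)
    (hb : ∀ i j : Fin n, g (b i) (b j) =
      if i = j then (if (i : ℕ) = 0 then (-1 : ℝ) else 1) else 0)
    (T : V →ₗ[ℝ] V)
    (hT : ∀ x y : V, g (T x) y = g x (T y)) :
    T ∘ₗ T ∘ₗ T = 0 ↔
      ∃ l : V, l ≠ 0 ∧ g l l = 0 ∧ (∀ x : V, g l (T x) = 0) ∧
        (∀ w : V, g l w = 0 → ∃ c : ℝ, T w = c • l) :=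
  stmt1_general hn g b hb T hT
end

section
/- Let T be a self-adjoint linear endomorphism of V with T ∘ T = 0 and T ≠ 0. Then there exists a null vector l ∈ V such that the range of T is contained in ℝ·l and T(w) = 0 for every w ∈ {l}⊥. -/
/-!
The range of `T` is totally isotropic, since `g (T x) (T y) = g x (T (T y)) = 0`. In Lorentzian
signature a totally isotropic subspace is at most a line: for orthogonal null vectors `u ≠ 0`
and `w` with time components `u₀ ≠ 0` and `w₀`, the vector `u₀ • w - w₀ • u` is null and has
zero time component, so it vanishes because the spatial part of `g` is positive definite.
Hence the range of `T` lies on the line of a null vector `l = T v`. If `g l w = 0`, then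
`g y (T w) = g (T y) w` is a multiple of `g l w = 0` for every `y`, so `T w = 0` because `g`
is nondegenerate.
-/

namespace LinearMap

theorem apply_apply_eq_zero_of_comp_self_eq_zero {R M N : Type*} [CommSemiring R]
    [AddCommMonoid M] [Module R M] [AddCommMonoid N] [Module R N]
    {B : M →ₗ[R] M →ₗ[R] N} {T : M →ₗ[R] M} (hT : ∀ x y, B (T x) y = B x (T y))
    (hTT : T ∘ₗ T = 0) (x y : M) : B (T x) (T y) = 0 := by
  rw [hT, ← comp_apply T T y, hTT, zero_apply, map_zero]

namespace IsOrthoᵢ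

theorem apply_eq_sum_repr_mul_repr_mul {ι R M : Type*} [Fintype ι] [CommSemiring R]
    [AddCommMonoid M] [Module R M] {B : M →ₗ[R] M →ₗ[R] R} {b : Module.Basis ι R M}
    (hb : B.IsOrthoᵢ b) (x y : M) :
    B x y = ∑ i, b.repr x i * b.repr y i * B (b i) (b i) := by
  conv_lhs => rw [← b.sum_repr x, ← b.sum_repr y]
  simp only [map_sum, map_smul, sum_apply, smul_apply, smul_eq_mul, Finset.mul_sum]
  refine Finset.sum_congr rfl fun i _ => ?_
  rw [Finset.sum_eq_single i (fun j _ hji => by rw [hb hji]; ring) (by simp)]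
  ring

variable {ι 𝕜 V : Type*} [Fintype ι] [Field 𝕜] [LinearOrder 𝕜] [IsStrictOrderedRing 𝕜]
  [AddCommGroup V] [Module 𝕜 V] {B : V →ₗ[𝕜] V →ₗ[𝕜] 𝕜} {b : Module.Basis ι 𝕜 V} {i₀ : ι}

theorem eq_zero_of_apply_self_eq_zero_of_repr_eq_zero (hb : B.IsOrthoᵢ b)
    (hspace : ∀ i ≠ i₀, B (b i) (b i) = 1) {z : V} (hzz : B z z = 0)
    (hz : b.repr z i₀ = 0) : z = 0 := by
  have hsq : ∑ i, b.repr z i * b.repr z i = 0 := by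
    rw [← hzz, hb.apply_eq_sum_repr_mul_repr_mul]
    refine Finset.sum_congr rfl fun i _ => ?_
    rcases eq_or_ne i i₀ with rfl | hi
    · simp [hz]
    · rw [hspace i hi, mul_one]
  have hcoord := (Finset.sum_eq_zero_iff_of_nonneg fun i _ => mul_self_nonneg _).mp hsq
  exact b.forall_coord_eq_zero_iff.mp fun i => mul_self_eq_zero.mp (hcoord i (by simp))

theorem exists_eq_smul_of_apply_eq_zero (hb : B.IsOrthoᵢ b)
    (hspace : ∀ i ≠ i₀, B (b i) (b i) = 1) {u w : V} (hu : u ≠ 0) (huu : B u u = 0)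
    (hww : B w w = 0) (huw : B u w = 0) (hwu : B w u = 0) : ∃ c : 𝕜, w = c • u := by
  set a := b.repr u i₀
  set c := b.repr w i₀
  have ha : a ≠ 0 := fun ha => hu (hb.eq_zero_of_apply_self_eq_zero_of_repr_eq_zero hspace huu ha)
  have hz : a • w - c • u = 0 := by
    refine hb.eq_zero_of_apply_self_eq_zero_of_repr_eq_zero hspace ?_ ?_
    · simp [huu, hww, huw, hwu]
    · simp [a, c, mul_comm]
  refine ⟨c / a, ?_⟩
  rw [div_eq_inv_mul, mul_smul, ← sub_eq_zero.mp hz, inv_smul_smul₀ ha]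

end IsOrthoᵢ

end LinearMap

theorem stmt4_general {V : Type*} [AddCommGroup V] [Module ℝ V]
    {n : ℕ}
    (g : V →ₗ[ℝ] V →ₗ[ℝ] ℝ)
    (b : Module.Basis (Fin n) ℝ V)
    (hb : ∀ i j : Fin n, g (b i) (b j) =
      if i = j then (if (i : ℕ) = 0 then (-1 : ℝ) else 1) else 0)
    (T : V →ₗ[ℝ] V)
    (hT : ∀ x y : V, g (T x) y = g x (T y))
    (hTT : T ∘ₗ T = 0) (hT0 : T ≠ 0) :
    ∃ l : V, l ≠ 0 ∧ g l l = 0 ∧ (∀ x : V, ∃ c : ℝ, T x = c • l) ∧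
      (∀ w : V, g l w = 0 → T w = 0) := by
  obtain ⟨v, hv⟩ : ∃ v, T v ≠ 0 := not_forall.mp fun h => hT0 (LinearMap.ext h)
  have : Nontrivial V := ⟨⟨T v, 0, hv⟩⟩
  obtain ⟨k⟩ := b.index_nonempty
  have hortho : g.IsOrthoᵢ b := fun i j hij => (hb i j).trans (if_neg hij)
  have hspace : ∀ j ≠ (⟨0, k.pos⟩ : Fin n), g (b j) (b j) = 1 := fun j hj => by
    rw [hb, if_pos rfl, if_neg (fun h => hj (Fin.ext h))]
  have hnondeg : ∀ j, g (b j) (b j) ≠ 0 := fun j => by rw [hb, if_pos rfl]; split_ifs <;> norm_num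
  have hiso := LinearMap.apply_apply_eq_zero_of_comp_self_eq_zero hT hTT
  have hrange : ∀ x, ∃ c : ℝ, T x = c • T v := fun x =>
    hortho.exists_eq_smul_of_apply_eq_zero hspace hv (hiso v v) (hiso x x) (hiso v x) (hiso x v)
  refine ⟨T v, hv, hiso v v, hrange, fun w hw => ?_⟩
  refine LinearMap.IsOrthoᵢ.separatingRight_iff_not_isOrtho_basis_self b hortho hnondeg (T w)
    fun y => ?_
  obtain ⟨c, hc⟩ := hrange y
  rw [← hT, hc, LinearMap.map_smul₂, hw, smul_zero]

/-- If `T` is a nonzero self-adjoint endomorphism of a Lorentzian vector space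
`(V, g)` with `T ∘ T = 0`, then there is a null vector `l` such that the range of `T` is
contained in `ℝ • l` and `T` annihilates `{l}⊥`. -/
theorem stmt4 {V : Type*} [AddCommGroup V] [Module ℝ V]
    {n : ℕ} (hn : 2 ≤ n)
    (g : V →ₗ[ℝ] V →ₗ[ℝ] ℝ)
    (hg_symm : ∀ x y : V, g x y = g y x)
    (b : Module.Basis (Fin n) ℝ V)
    (hb : ∀ i j : Fin n, g (b i) (b j) =
      if i = j then (if (i : ℕ) = 0 then (-1 : ℝ) else 1) else 0)
    (T : V →ₗ[ℝ] V)
    (hT : ∀ x y : V, g (T x) y = g x (T y))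
    (hTT : T ∘ₗ T = 0) (hT0 : T ≠ 0) :
    ∃ l : V, l ≠ 0 ∧ g l l = 0 ∧ (∀ x : V, ∃ c : ℝ, T x = c • l) ∧
      (∀ w : V, g l w = 0 → T w = 0) :=
  stmt4_general g b hb T hT hTT hT0
end

section
/- Let B be a symmetric bilinear form on V and l ∈ V a null vector. Then B is nilpotent with respect to l if and only if there exists a linear functional α : V → ℝ with α(l) = 0 such that B(v,w) = g(l,v)·α(w) + α(v)·g(l,w) for all v,w ∈ V. -/
/-!
The Lorentzian metric is nondegenerate, so `φ := g l` is a nonzero functional vanishing on `l`,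
and everything reduces to a statement about a symmetric form `B` and a nonzero functional `φ`.
Choosing `u` with `φ u = 1`, every vector splits as `v = (v - φ v • u) + φ v • u` with the first
summand in `ker φ`. If `B` vanishes on `ker φ × ker φ`, expanding `B` along this splitting gives
`B = φ ⊗ α + α ⊗ φ` with `α := B u - (B u u / 2) • φ`, and `α l = B u l = 0`.
-/

section SymmetricProduct

variable {K V : Type*} [Field K] [NeZero (2 : K)] [AddCommGroup V] [Module K V]

theorem LinearMap.eq_mul_add_mul_of_vanishes_on_ker (φ : V →ₗ[K] K) {u : V} (hu : φ u = 1)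
    {B : V →ₗ[K] V →ₗ[K] K} (hB : ∀ x y, B x y = B y x)
    (hker : ∀ w w', φ w = 0 → φ w' = 0 → B w w' = 0) (v w : V) :
    B v w = φ v * (B u - (B u u / 2) • φ) w + (B u - (B u u / 2) • φ) v * φ w := by
  have hφ_proj (x : V) : φ (x - φ x • u) = 0 := by simp [hu]
  have hB_proj := hker _ _ (hφ_proj v) (hφ_proj w)
  simp only [map_sub, map_smul, LinearMap.sub_apply, LinearMap.smul_apply, smul_eq_mul]
    at hB_proj ⊢
  linear_combination hB_proj + φ w * hB v u
    + φ v * φ w * B u u * inv_mul_cancel₀ (two_ne_zero' K)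

theorem LinearMap.vanishes_on_ker_iff_exists_eq_mul_add_mul (φ : V →ₗ[K] K) (hφ : φ ≠ 0)
    {B : V →ₗ[K] V →ₗ[K] K} (hB : ∀ x y, B x y = B y x) {l : V} (hl : φ l = 0) :
    ((∀ z, B l z = 0) ∧ (∀ w w', φ w = 0 → φ w' = 0 → B w w' = 0)) ↔
      ∃ α : V →ₗ[K] K, α l = 0 ∧ ∀ v w, B v w = φ v * α w + α v * φ w := by
  constructor
  · rintro ⟨hBl, hker⟩
    obtain ⟨x, hx⟩ : ∃ x, φ x ≠ 0 := by simpa [LinearMap.ext_iff] using hφ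
    have hu : φ ((φ x)⁻¹ • x) = 1 := by simp [hx]
    refine ⟨_, ?_, φ.eq_mul_add_mul_of_vanishes_on_ker hu hB hker⟩
    simp [hl, hB _ l, hBl]
  · rintro ⟨α, hαl, hα⟩
    exact ⟨fun z ↦ by simp [hα, hl, hαl], fun w w' hw hw' ↦ by simp [hα, hw, hw']⟩

end SymmetricProduct

theorem stmt5_general {V : Type*} [AddCommGroup V] [Module ℝ V]
    {n : ℕ}
    (g : V →ₗ[ℝ] V →ₗ[ℝ] ℝ)
    (b : Module.Basis (Fin n) ℝ V)
    (hb : ∀ i j : Fin n, g (b i) (b j) =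
      if i = j then (if (i : ℕ) = 0 then (-1 : ℝ) else 1) else 0)
    (B : V →ₗ[ℝ] V →ₗ[ℝ] ℝ)
    (hB_symm : ∀ x y : V, B x y = B y x)
    (l : V) (hl : l ≠ 0 ∧ g l l = 0) :
    ((∀ z : V, B l z = 0) ∧
        (∀ w w' : V, g l w = 0 → g l w' = 0 → B w w' = 0)) ↔
      ∃ α : V →ₗ[ℝ] ℝ, α l = 0 ∧
        ∀ v w : V, B v w = g l v * α w + α v * g l w := by
  have hg_sep : g.SeparatingLeft :=
    LinearMap.IsOrthoᵢ.separatingLeft_of_not_isOrtho_basis_self b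
      (LinearMap.isOrthoᵢ_def.mpr fun i j hij ↦ by simp [hb, hij])
      (fun i ↦ by rw [hb, if_pos rfl]; split_ifs <;> norm_num)
  have hgl : g l ≠ 0 := fun h ↦ hl.1 (hg_sep l fun y ↦ by simp [h])
  exact (g l).vanishes_on_ker_iff_exists_eq_mul_add_mul hgl hB_symm hl.2

/-- Let `B` be a symmetric bilinear form on a Lorentzian vector space `(V, g)`
and `l` a null vector.  Then `B` is nilpotent with respect to `l` (i.e. `B l z = 0` for all
`z` and `B w w' = 0` for all `w, w' ∈ {l}⊥`) iff there is a linear functional `α` with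
`α l = 0` and `B v w = g l v * α w + α v * g l w` for all `v, w`. -/
theorem stmt5 {V : Type*} [AddCommGroup V] [Module ℝ V]
    {n : ℕ} (hn : 2 ≤ n)
    (g : V →ₗ[ℝ] V →ₗ[ℝ] ℝ)
    (hg_symm : ∀ x y : V, g x y = g y x)
    (b : Module.Basis (Fin n) ℝ V)
    (hb : ∀ i j : Fin n, g (b i) (b j) =
      if i = j then (if (i : ℕ) = 0 then (-1 : ℝ) else 1) else 0)
    (B : V →ₗ[ℝ] V →ₗ[ℝ] ℝ)
    (hB_symm : ∀ x y : V, B x y = B y x)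
    (l : V) (hl : l ≠ 0 ∧ g l l = 0) :
    ((∀ z : V, B l z = 0) ∧
        (∀ w w' : V, g l w = 0 → g l w' = 0 → B w w' = 0)) ↔
      ∃ α : V →ₗ[ℝ] ℝ, α l = 0 ∧
        ∀ v w : V, B v w = g l v * α w + α v * g l w :=
  stmt5_general g b hb B hB_symm l hl
end

section
/- Let B be a symmetric bilinear form on V that is nilpotent with respect to a null vector l, and let B̂ : V → V be the unique linear endomorphism with g(B̂v, w) = B(v,w) for all v,w ∈ V. Then B̂ ∘ B̂ = 0 if and only if B(w,v) = 0 for every w ∈ {l}⊥ and every v ∈ V. -/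
/-!
A vector `u` that is null and orthogonal to the null vector `l` is a multiple of `l`: for a unit
timelike `e`, the combination `g(l,e) u - g(u,e) l` is null and orthogonal to `e`, hence zero,
because `e⊥` is spacelike. Now `B̂` takes values in `l⊥`, so `B̂ ∘ B̂ = 0` says that `B` vanishes
on `B̂ V × V`; this certainly holds when `B` vanishes on `l⊥ × V`. Conversely, if `g(l,k) = 1`,
then `B̂ k = s l` since it is null and orthogonal to `l`, so `B(w,k) = s g(l,w) = 0` for
`w ∈ l⊥`; together with nilpotency this kills `B(w, ·)` on `ℝ k ⊕ l⊥ = V`.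
-/

section NullCone

variable {K V : Type*} [Field K] [AddCommGroup V] [Module K V]

theorem exists_eq_smul_of_isotropic_of_orthogonal (g : V →ₗ[K] V →ₗ[K] K)
    (hg : ∀ x y, g x y = g y x) (e : V) (he : ∀ x, g x e = 0 → g x x = 0 → x = 0)
    {l u : V} (hl : l ≠ 0) (hll : g l l = 0) (huu : g u u = 0) (hlu : g l u = 0) :
    ∃ t : K, u = t • l := by
  have hle : g l e ≠ 0 := fun h => hl (he l h hll)
  set u' := g l e • u - g u e • l
  have hu'e : g u' e = 0 := by simp [u', mul_comm]
  have hu'u' : g u' u' = 0 := by simp [u', huu, hll, hlu, hg u l]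
  refine ⟨g u e / g l e, ?_⟩
  rw [div_eq_inv_mul, mul_smul, ← sub_eq_zero.mp (he u' hu'e hu'u'), smul_smul,
    inv_mul_cancel₀ hle, one_smul]

theorem exists_apply_eq_one {g : V →ₗ[K] V →ₗ[K] K} (hg : g.SeparatingLeft) {l : V}
    (hl : l ≠ 0) : ∃ k, g l k = 1 := by
  obtain ⟨w, hw⟩ : ∃ w, g l w ≠ 0 := by
    by_contra! h
    exact hl (hg l h)
  exact ⟨(g l w)⁻¹ • w, by simp [hw]⟩

end NullCone

section Lorentzian

variable {V : Type*} [AddCommGroup V] [Module ℝ V] {n : ℕ} {g : V →ₗ[ℝ] V →ₗ[ℝ] ℝ}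
  {b : Module.Basis (Fin n) ℝ V}

theorem apply_basis_eq_of_lorentzian
    (hb : ∀ i j : Fin n, g (b i) (b j) =
      if i = j then (if (i : ℕ) = 0 then (-1 : ℝ) else 1) else 0) (x : V) (i : Fin n) :
    g x (b i) = (if (i : ℕ) = 0 then (-1 : ℝ) else 1) * b.repr x i := by
  conv_lhs => rw [← b.sum_repr x]
  simp only [map_sum, map_smul, LinearMap.sum_apply, LinearMap.smul_apply, hb, smul_eq_mul,
    mul_ite, mul_zero, Finset.sum_ite_eq', Finset.mem_univ, if_true]
  split_ifs <;> ring

theorem separatingLeft_of_lorentzian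
    (hb : ∀ i j : Fin n, g (b i) (b j) =
      if i = j then (if (i : ℕ) = 0 then (-1 : ℝ) else 1) else 0) : g.SeparatingLeft := by
  intro x hx
  refine b.forall_coord_eq_zero_iff.mp fun i => ?_
  have h := hx (b i)
  rw [apply_basis_eq_of_lorentzian hb] at h
  exact (mul_eq_zero.mp h).resolve_left (by split_ifs <;> norm_num)

theorem apply_self_eq_sum_of_lorentzian
    (hb : ∀ i j : Fin n, g (b i) (b j) =
      if i = j then (if (i : ℕ) = 0 then (-1 : ℝ) else 1) else 0) (x : V) :
    g x x = ∑ i : Fin n, (if (i : ℕ) = 0 then (-1 : ℝ) else 1) * b.repr x i ^ 2 := by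
  nth_rewrite 2 [← b.sum_repr x]
  simp only [map_sum, map_smul, smul_eq_mul, apply_basis_eq_of_lorentzian hb]
  exact Finset.sum_congr rfl fun i _ => by ring

theorem eq_zero_of_orthogonal_timelike_of_isotropic
    (hb : ∀ i j : Fin n, g (b i) (b j) =
      if i = j then (if (i : ℕ) = 0 then (-1 : ℝ) else 1) else 0)
    {i₀ : Fin n} (h₀ : (i₀ : ℕ) = 0) {x : V} (hx : g x (b i₀) = 0) (hxx : g x x = 0) :
    x = 0 := by
  have hx₀ : b.repr x i₀ = 0 := by simpa [apply_basis_eq_of_lorentzian hb, h₀] using hx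
  have hterm : ∀ i : Fin n,
      (if (i : ℕ) = 0 then (-1 : ℝ) else 1) * b.repr x i ^ 2 = b.repr x i ^ 2 := by
    intro i
    by_cases hi : (i : ℕ) = 0
    · obtain rfl : i = i₀ := Fin.ext (hi.trans h₀.symm)
      simp [hx₀]
    · simp [hi]
  rw [apply_self_eq_sum_of_lorentzian hb, Finset.sum_congr rfl fun i _ => hterm i,
    Finset.sum_eq_zero_iff_of_nonneg fun i _ => sq_nonneg _] at hxx
  exact b.forall_coord_eq_zero_iff.mp fun i => pow_eq_zero_iff two_ne_zero |>.mp
    (hxx i (Finset.mem_univ i))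

end Lorentzian

section NilpotentForm

variable {K V : Type*} [Field K] [AddCommGroup V] [Module K V] {g B : V →ₗ[K] V →ₗ[K] K}
  {Bhat : V →ₗ[K] V}

theorem comp_self_eq_zero_iff_of_separatingLeft (hg : g.SeparatingLeft)
    (hBhat : ∀ v w, g (Bhat v) w = B v w) :
    Bhat ∘ₗ Bhat = 0 ↔ ∀ v w, B (Bhat v) w = 0 := by
  constructor
  · intro h v w
    rw [← hBhat, ← LinearMap.comp_apply Bhat Bhat, h, LinearMap.zero_apply, map_zero,
      LinearMap.zero_apply]
  · intro h
    ext v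
    exact hg _ fun w => (hBhat _ w).trans (h v w)

theorem apply_map_eq_zero_of_apply_eq_zero (hg : ∀ x y, g x y = g y x)
    (hB : ∀ x y, B x y = B y x) (hBhat : ∀ v w, g (Bhat v) w = B v w) {l : V}
    (hl : ∀ z, B l z = 0) (v : V) : g l (Bhat v) = 0 := by
  rw [hg, hBhat, hB, hl]

theorem comp_self_eq_zero_iff_of_nilpotent (hg : ∀ x y, g x y = g y x)
    (hsep : g.SeparatingLeft) {l : V} (hl : l ≠ 0)
    (hnull : ∀ u, g l u = 0 → g u u = 0 → ∃ t : K, u = t • l)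
    (hB : ∀ x y, B x y = B y x) (hBl : ∀ z, B l z = 0)
    (hBperp : ∀ w w', g l w = 0 → g l w' = 0 → B w w' = 0)
    (hBhat : ∀ v w, g (Bhat v) w = B v w) :
    Bhat ∘ₗ Bhat = 0 ↔ ∀ w, g l w = 0 → ∀ v, B w v = 0 := by
  have hrange := apply_map_eq_zero_of_apply_eq_zero hg hB hBhat hBl
  rw [comp_self_eq_zero_iff_of_separatingLeft hsep hBhat]
  refine ⟨fun h w hw v => ?_, fun h v w => h _ (hrange v) w⟩
  obtain ⟨k, hk⟩ := exists_apply_eq_one hsep hl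
  obtain ⟨s, hs⟩ := hnull (Bhat k) (hrange k) (by rw [hBhat, hB]; exact h k k)
  have hwk : B w k = 0 := by
    rw [hB, ← hBhat, hs, map_smul, LinearMap.smul_apply, hw, smul_zero]
  have hv : g l (v - g l v • k) = 0 := by simp [hk]
  calc B w v = B w (g l v • k + (v - g l v • k)) := by rw [add_sub_cancel]
    _ = 0 := by rw [map_add, map_smul, hwk, hBperp w _ hw hv, smul_zero, add_zero]

end NilpotentForm

/-- Let `B` be a symmetric bilinear form on a Lorentzian vector space `(V, g)`,
nilpotent with respect to a null vector `l`, and let `B̂` be the unique endomorphism with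
`g (B̂ v) w = B v w`.  Then `B̂ ∘ B̂ = 0` iff `B w v = 0` for every `w ∈ {l}⊥` and every `v`. -/
theorem stmt6 {V : Type*} [AddCommGroup V] [Module ℝ V]
    {n : ℕ} (hn : 2 ≤ n)
    (g : V →ₗ[ℝ] V →ₗ[ℝ] ℝ)
    (hg_symm : ∀ x y : V, g x y = g y x)
    (b : Module.Basis (Fin n) ℝ V)
    (hb : ∀ i j : Fin n, g (b i) (b j) =
      if i = j then (if (i : ℕ) = 0 then (-1 : ℝ) else 1) else 0)
    (B : V →ₗ[ℝ] V →ₗ[ℝ] ℝ)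
    (hB_symm : ∀ x y : V, B x y = B y x)
    (l : V) (hl : l ≠ 0 ∧ g l l = 0)
    (hnil : (∀ z : V, B l z = 0) ∧
      (∀ w w' : V, g l w = 0 → g l w' = 0 → B w w' = 0))
    (Bhat : V →ₗ[ℝ] V)
    (hBhat : ∀ v w : V, g (Bhat v) w = B v w) :
    Bhat ∘ₗ Bhat = 0 ↔ ∀ w : V, g l w = 0 → ∀ v : V, B w v = 0 := by
  have hnull : ∀ u, g l u = 0 → g u u = 0 → ∃ t : ℝ, u = t • l := fun u hlu huu =>
    exists_eq_smul_of_isotropic_of_orthogonal g hg_symm (b ⟨0, by omega⟩)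
      (fun _ => eq_zero_of_orthogonal_timelike_of_isotropic hb rfl) hl.1 hl.2 huu hlu
  exact comp_self_eq_zero_iff_of_nilpotent hg_symm (separatingLeft_of_lorentzian hb) hl.1 hnull
    hB_symm hnil.1 hnil.2 hBhat
end

section
/- Let g be a Lorentzian metric on E, l a null vector field, and X a vector field that is nil-Killing with respect to l. Then g_x(l(x), [X,l](x)) = 0 for every x ∈ E. -/
variable {E : Type*}

/-- The Lie bracket of two vector fields on a normed space:
`[X,Y](x) = (DY)_x(X x) - (DX)_x(Y x)`. -/
noncomputable def vfLieBracket [NormedAddCommGroup E] [NormedSpace ℝ E]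
    (X Y : E → E) : E → E :=
  fun x => fderiv ℝ Y x (X x) - fderiv ℝ X x (Y x)

/-- The Lie derivative of a smooth field of (continuous) bilinear forms `T` along a vector
field `X`: `(L_X T)_x (v, w) = (DT)_x(X x)(v, w) + T_x((DX)_x v, w) + T_x(v, (DX)_x w)`. -/
noncomputable def lieDerivSym [NormedAddCommGroup E] [NormedSpace ℝ E]
    (X : E → E) (T : E → (E →L[ℝ] E →L[ℝ] ℝ)) (x : E) :
    E →L[ℝ] E →L[ℝ] ℝ :=
  fderiv ℝ T x (X x) + (T x).comp (fderiv ℝ X x)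
    + ((ContinuousLinearMap.compL ℝ E E ℝ).flip (fderiv ℝ X x)).comp (T x)

/-- A bilinear form `B` is nilpotent with respect to a vector `v` (relative to the bilinear
form `gx`): `B(v, z) = 0` for all `z`, and `B(w, w') = 0` whenever `w, w' ⊥ v`. -/
def NilpotentWrt [NormedAddCommGroup E] [NormedSpace ℝ E]
    (gx B : E →L[ℝ] E →L[ℝ] ℝ) (v : E) : Prop :=
  (∀ z : E, B v z = 0) ∧
    ∀ w w' : E, gx v w = 0 → gx v w' = 0 → B w w' = 0

/-- A (continuous) bilinear form on `E` is (nondegenerate of) Lorentzian signature if it is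
diagonal `(-1, 1, …, 1)` with respect to some basis. -/
def IsLorentzianForm [NormedAddCommGroup E] [NormedSpace ℝ E]
    (B : E →L[ℝ] E →L[ℝ] ℝ) : Prop :=
  ∃ b : Module.Basis (Fin (Module.finrank ℝ E)) ℝ E,
    ∀ i j, B (b i) (b j) =
      if i = j then (if (i : ℕ) = 0 then (-1 : ℝ) else 1) else 0
/-- If `g` is a Lorentzian metric on `E`, `l` a null vector field, and `X`
nil-Killing with respect to `l`, then `g_x(l x, [X,l] x) = 0` for all `x`. -/
theorem stmt11 [NormedAddCommGroup E] [NormedSpace ℝ E] [FiniteDimensional ℝ E]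
    (g : E → (E →L[ℝ] E →L[ℝ] ℝ)) (hg : ContDiff ℝ (⊤ : ℕ∞) g)
    (hg_symm : ∀ (x v w : E), g x v w = g x w v)
    (hg_lor : ∀ x : E, IsLorentzianForm (g x))
    (l : E → E) (hl : ContDiff ℝ (⊤ : ℕ∞) l)
    (hl_null : ∀ x : E, l x ≠ 0 ∧ g x (l x) (l x) = 0)
    (X : E → E) (hX : ContDiff ℝ (⊤ : ℕ∞) X)
    (hX_nil : ∀ x : E, NilpotentWrt (g x) (lieDerivSym X g x) (l x)) :
    ∀ x : E, g x (l x) (vfLieBracket X l x) = 0 := by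
  intro x
  have hgd : DifferentiableAt ℝ g x := hg.differentiable (by simp) x
  have hld : DifferentiableAt ℝ l x := hl.differentiable (by simp) x
  have hgl : DifferentiableAt ℝ (fun y => g y (l y)) x := hgd.clm_apply hld
  -- the function y ↦ g y (l y) (l y) is identically 0
  have hzero : (fun y => g y (l y) (l y)) = fun _ => (0 : ℝ) := by
    funext y; exact (hl_null y).2
  have hf : fderiv ℝ (fun y => g y (l y) (l y)) x = 0 := by
    rw [hzero]; exact fderiv_const_apply 0
  have h1 : fderiv ℝ (fun y => g y (l y) (l y)) x =
      ((fun y => g y (l y)) x).comp (fderiv ℝ l x)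
        + (fderiv ℝ (fun y => g y (l y)) x).flip (l x) :=
    fderiv_clm_apply hgl hld
  have h2 : fderiv ℝ (fun y => g y (l y)) x =
      (g x).comp (fderiv ℝ l x) + (fderiv ℝ g x).flip (l x) :=
    fderiv_clm_apply hgd hld
  have key : g x (l x) (fderiv ℝ l x (X x)) + g x (fderiv ℝ l x (X x)) (l x)
      + fderiv ℝ g x (X x) (l x) (l x) = 0 := by
    have := congrArg (fun f => f (X x)) h1
    simp only [hf, h2, ContinuousLinearMap.add_apply, ContinuousLinearMap.comp_apply,
      ContinuousLinearMap.flip_apply, ContinuousLinearMap.zero_apply] at this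
    linarith [this, hg_symm x (fderiv ℝ l x (X x)) (l x)]
  have nil : fderiv ℝ g x (X x) (l x) (l x) + g x (fderiv ℝ X x (l x)) (l x)
      + g x (l x) (fderiv ℝ X x (l x)) = 0 := by
    have := (hX_nil x).1 (l x)
    simpa [lieDerivSym, ContinuousLinearMap.add_apply, ContinuousLinearMap.comp_apply,
      ContinuousLinearMap.flip_apply, ContinuousLinearMap.compL_apply] using this
  have hsym1 := hg_symm x (fderiv ℝ l x (X x)) (l x)
  have hsym2 := hg_symm x (fderiv ℝ X x (l x)) (l x)
  simp only [vfLieBracket, map_sub]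
  linarith
end

section
/- Let g be a Lorentzian metric on E, l a null vector field, X a vector field that is nil-Killing with respect to l and satisfies [X,l] = f·l for some smooth function f : E → ℝ, and W a vector field with g_x(l(x),W(x)) = 0 for all x. Then g_x(l(x), [X,W](x)) = 0 for every x ∈ E. -/
variable {E : Type*}

/-- If `g` is a Lorentzian metric on `E`, `l` a null vector field, `X` a
nil-Killing vector field with respect to `l` with `[X,l] = f • l` for a smooth `f`, and `W`
a vector field orthogonal to `l`, then `g_x(l x, [X,W] x) = 0` for all `x`. -/
theorem stmt12 [NormedAddCommGroup E] [NormedSpace ℝ E] [FiniteDimensional ℝ E]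
    (g : E → (E →L[ℝ] E →L[ℝ] ℝ)) (hg : ContDiff ℝ (⊤ : ℕ∞) g)
    (hg_symm : ∀ (x v w : E), g x v w = g x w v)
    (hg_lor : ∀ x : E, IsLorentzianForm (g x))
    (l : E → E) (hl : ContDiff ℝ (⊤ : ℕ∞) l)
    (hl_null : ∀ x : E, l x ≠ 0 ∧ g x (l x) (l x) = 0)
    (X : E → E) (hX : ContDiff ℝ (⊤ : ℕ∞) X)
    (hX_nil : ∀ x : E, NilpotentWrt (g x) (lieDerivSym X g x) (l x))
    (f : E → ℝ) (hf : ContDiff ℝ (⊤ : ℕ∞) f)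
    (hXl : ∀ x : E, vfLieBracket X l x = f x • l x)
    (W : E → E) (hW : ContDiff ℝ (⊤ : ℕ∞) W)
    (hW_perp : ∀ x : E, g x (l x) (W x) = 0) :
    ∀ x : E, g x (l x) (vfLieBracket X W x) = 0 := by
  intro x
  have hgd := (hg.differentiable (by simp) x).hasFDerivAt
  have hld := (hl.differentiable (by simp) x).hasFDerivAt
  have hWd := (hW.differentiable (by simp) x).hasFDerivAt
  set Dg := fderiv ℝ g x with hDg
  set Dl := fderiv ℝ l x with hDl
  set DW := fderiv ℝ W x with hDW
  set DX := fderiv ℝ X x with hDX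
  have h1 : HasFDerivAt (fun y => g y (l y)) ((g x).comp Dl + Dg.flip (l x)) x :=
    hgd.clm_apply hld
  have h2 : HasFDerivAt (fun y => g y (l y) (W y))
      (((g x) (l x)).comp DW + ((g x).comp Dl + Dg.flip (l x)).flip (W x)) x :=
    h1.clm_apply hWd
  have h0 : HasFDerivAt (fun y => g y (l y) (W y)) (0 : E →L[ℝ] ℝ) x := by
    have he : (fun y => g y (l y) (W y)) = fun _ => (0 : ℝ) := funext hW_perp
    rw [he]; exact hasFDerivAt_const 0 x
  have heq := h2.unique h0
  have hA : g x (l x) (DW (X x)) + (g x (Dl (X x)) (W x) + Dg (X x) (l x) (W x)) = 0 := by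
    have h := congrArg (fun φ : E →L[ℝ] ℝ => φ (X x)) heq
    simpa using h
  have hB : Dg (X x) (l x) (W x) + g x (DX (l x)) (W x) + g x (l x) (DX (W x)) = 0 := by
    have h := (hX_nil x).1 (W x)
    simp only [lieDerivSym, ContinuousLinearMap.add_apply, ContinuousLinearMap.comp_apply,
      ContinuousLinearMap.flip_apply, ContinuousLinearMap.compL_apply, ← hDg, ← hDX] at h
    linarith
  have hC : g x (Dl (X x)) (W x) - g x (DX (l x)) (W x) = 0 := by
    have h := hXl x
    simp only [vfLieBracket, ← hDl, ← hDX] at h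
    have h2 := congrArg (fun v => g x v (W x)) h
    simp only [map_sub, ContinuousLinearMap.sub_apply, map_smul,
      ContinuousLinearMap.smul_apply, smul_eq_mul, hW_perp x, mul_zero] at h2
    exact h2
  simp only [vfLieBracket, ← hDW, ← hDX, map_sub, ContinuousLinearMap.sub_apply]
  linarith
end

section
/- Let g be a Lorentzian metric on E, l a null vector field, and X a vector field that is nil-Killing with respect to l and satisfies [X,l] = f·l for some smooth function f : E → ℝ. If T is a smooth field of symmetric bilinear forms on E such that T_x is nilpotent with respect to l(x) for every x, then (L_X T)_x is nilpotent with respect to l(x) for every x ∈ E. -/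
variable {E : Type*}

section Helpers
variable [NormedAddCommGroup E] [NormedSpace ℝ E]

lemma lieDerivSym_apply (X : E → E) (T : E → (E →L[ℝ] E →L[ℝ] ℝ)) (x v w : E) :
    lieDerivSym X T x v w =
      fderiv ℝ T x (X x) v w + T x (fderiv ℝ X x v) w + T x v (fderiv ℝ X x w) := by
  simp [lieDerivSym, ContinuousLinearMap.add_apply, ContinuousLinearMap.comp_apply,
    ContinuousLinearMap.flip_apply, ContinuousLinearMap.compL_apply]

lemma fderiv_bilin_apply {T : E → (E →L[ℝ] E →L[ℝ] ℝ)} {u v : E → E} {x : E}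
    (hT : DifferentiableAt ℝ T x) (hu : DifferentiableAt ℝ u x)
    (hv : DifferentiableAt ℝ v x) (ξ : E) :
    fderiv ℝ (fun y => T y (u y) (v y)) x ξ =
      fderiv ℝ T x ξ (u x) (v x) + T x (fderiv ℝ u x ξ) (v x)
        + T x (u x) (fderiv ℝ v x ξ) := by
  have h1 := hT.hasFDerivAt.clm_apply hu.hasFDerivAt
  have h2 := h1.clm_apply hv.hasFDerivAt
  rw [h2.fderiv]
  simp [ContinuousLinearMap.add_apply, ContinuousLinearMap.comp_apply,
    ContinuousLinearMap.flip_apply]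
  ring

lemma IsLorentzianForm.exists_pair_one [FiniteDimensional ℝ E]
    {B : E →L[ℝ] E →L[ℝ] ℝ} (hB : IsLorentzianForm B) {v : E} (hv : v ≠ 0) :
    ∃ n : E, B v n = 1 := by
  obtain ⟨b, hb⟩ := hB
  obtain ⟨j, hj⟩ : ∃ j, b.repr v j ≠ 0 := by
    by_contra h
    push_neg at h
    exact hv (by simpa using b.repr.injective (Finsupp.ext (by simpa using h)))
  set e : ℝ := if (j : ℕ) = 0 then (-1 : ℝ) else 1 with he
  have he0 : e ≠ 0 := by rw [he]; split <;> norm_num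
  have hBvj : B v (b j) = b.repr v j * e := by
    have h1 : B v (b j) = ∑ i, b.repr v i * B (b i) (b j) := by
      conv_lhs => rw [← b.sum_repr v]
      simp only [map_sum, map_smul, ContinuousLinearMap.sum_apply, ContinuousLinearMap.smul_apply, smul_eq_mul]
    rw [h1, Finset.sum_eq_single j]
    · rw [hb]; simp [he]
    · intro i _ hij; rw [hb]; simp [hij]
    · intro h; exact absurd (Finset.mem_univ j) h
  refine ⟨(b.repr v j * e)⁻¹ • b j, ?_⟩
  rw [map_smul, smul_eq_mul, hBvj]
  field_simp

lemma nil_decomp_left {gx B : E →L[ℝ] E →L[ℝ] ℝ} {lx n : E}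
    (hB : NilpotentWrt gx B lx) (hn : gx lx n = 1) (u : E) {w' : E}
    (hw' : gx lx w' = 0) : B u w' = gx lx u * B n w' := by
  have h := hB.2 (u - gx lx u • n) w' (by simp [map_sub, map_smul, hn]) hw'
  simp only [map_sub, map_smul, ContinuousLinearMap.sub_apply,
    ContinuousLinearMap.smul_apply, smul_eq_mul] at h
  linarith

lemma nil_decomp_right {gx B : E →L[ℝ] E →L[ℝ] ℝ} {lx n : E}
    (hB : NilpotentWrt gx B lx) (hn : gx lx n = 1) {w : E}
    (hw : gx lx w = 0) (u : E) : B w u = gx lx u * B w n := by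
  have h := hB.2 w (u - gx lx u • n) hw (by simp [map_sub, map_smul, hn])
  simp only [map_sub, map_smul, smul_eq_mul] at h
  linarith

end Helpers

/-- If `X` is nil-Killing with respect to the null vector field `l` with
`[X,l] = f • l`, and `T` is a smooth field of symmetric bilinear forms such that `T_x` is
nilpotent with respect to `l x` for every `x`, then `(L_X T)_x` is nilpotent with respect
to `l x` for every `x`. -/
theorem stmt13 [NormedAddCommGroup E] [NormedSpace ℝ E] [FiniteDimensional ℝ E]
    (g : E → (E →L[ℝ] E →L[ℝ] ℝ)) (hg : ContDiff ℝ (⊤ : ℕ∞) g)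
    (hg_symm : ∀ (x v w : E), g x v w = g x w v)
    (hg_lor : ∀ x : E, IsLorentzianForm (g x))
    (l : E → E) (hl : ContDiff ℝ (⊤ : ℕ∞) l)
    (hl_null : ∀ x : E, l x ≠ 0 ∧ g x (l x) (l x) = 0)
    (X : E → E) (hX : ContDiff ℝ (⊤ : ℕ∞) X)
    (hX_nil : ∀ x : E, NilpotentWrt (g x) (lieDerivSym X g x) (l x))
    (f : E → ℝ) (hf : ContDiff ℝ (⊤ : ℕ∞) f)
    (hXl : ∀ x : E, vfLieBracket X l x = f x • l x)
    (T : E → (E →L[ℝ] E →L[ℝ] ℝ)) (hT : ContDiff ℝ (⊤ : ℕ∞) T)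
    (hT_symm : ∀ (x v w : E), T x v w = T x w v)
    (hT_nil : ∀ x : E, NilpotentWrt (g x) (T x) (l x)) :
    ∀ x : E, NilpotentWrt (g x) (lieDerivSym X T x) (l x) := by
  have hgd : Differentiable ℝ g := hg.differentiable (by simp)
  have hld : Differentiable ℝ l := hl.differentiable (by simp)
  have hXd : Differentiable ℝ X := hX.differentiable (by simp)
  have hTd : Differentiable ℝ T := hT.differentiable (by simp)
  intro x
  have hbr : fderiv ℝ X x (l x) = fderiv ℝ l x (X x) - f x • l x := by
    have h := hXl x
    unfold vfLieBracket at h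
    rw [sub_eq_iff_eq_add] at h
    rw [h]
    abel
  constructor
  · intro z
    rw [lieDerivSym_apply]
    have hzero : fderiv ℝ (fun y => T y (l y) z) x (X x) = 0 := by
      have : (fun y => T y (l y) z) = fun _ => (0 : ℝ) :=
        funext fun y => (hT_nil y).1 z
      rw [this]
      simp
    rw [fderiv_bilin_apply (hTd x) (hld x) (differentiableAt_const z) (X x)] at hzero
    simp only [fderiv_fun_const, Pi.zero_apply, ContinuousLinearMap.zero_apply, map_zero,
      add_zero] at hzero
    have h2 := (hT_nil x).1 (fderiv ℝ X x z)
    have h3 := (hT_nil x).1 z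
    rw [hbr]
    simp only [map_sub, map_smul, ContinuousLinearMap.sub_apply,
      ContinuousLinearMap.smul_apply, smul_eq_mul]
    rw [h2, h3]
    linarith
  · intro w w' hw hw'
    obtain ⟨n, hn⟩ := (hg_lor x).exists_pair_one (hl_null x).1
    set W : E → E := fun y => (g y (l y) n) • w - (g y (l y) w) • n with hW
    set W' : E → E := fun y => (g y (l y) n) • w' - (g y (l y) w') • n with hW'
    have hφd : Differentiable ℝ fun y => g y (l y) n :=
      fun y => ((hgd y).clm_apply (hld y)).clm_apply (differentiableAt_const n)
    have had : Differentiable ℝ fun y => g y (l y) w :=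
      fun y => ((hgd y).clm_apply (hld y)).clm_apply (differentiableAt_const w)
    have ha'd : Differentiable ℝ fun y => g y (l y) w' :=
      fun y => ((hgd y).clm_apply (hld y)).clm_apply (differentiableAt_const w')
    have hWd : DifferentiableAt ℝ W x :=
      ((hφd x).smul_const w).sub ((had x).smul_const n)
    have hW'd : DifferentiableAt ℝ W' x :=
      ((hφd x).smul_const w').sub ((ha'd x).smul_const n)
    have hWx : W x = w := by rw [hW]; simp [hn, hw]
    have hW'x : W' x = w' := by rw [hW']; simp [hn, hw']
    have hgW : ∀ y, g y (l y) (W y) = 0 := by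
      intro y
      rw [hW]
      simp only [map_sub, map_smul, ContinuousLinearMap.sub_apply,
        ContinuousLinearMap.smul_apply, smul_eq_mul]
      ring
    have hgW' : ∀ y, g y (l y) (W' y) = 0 := by
      intro y
      rw [hW']
      simp only [map_sub, map_smul, ContinuousLinearMap.sub_apply,
        ContinuousLinearMap.smul_apply, smul_eq_mul]
      ring
    -- derivative of the identically-zero function y ↦ T y (W y) (W' y)
    have hmain : fderiv ℝ (fun y => T y (W y) (W' y)) x (X x) = 0 := by
      have : (fun y => T y (W y) (W' y)) = fun _ => (0 : ℝ) :=
        funext fun y => (hT_nil y).2 _ _ (hgW y) (hgW' y)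
      rw [this]; simp
    rw [fderiv_bilin_apply (hTd x) hWd hW'd (X x)] at hmain
    -- compute the derivatives of W and W'
    have hDW : fderiv ℝ W x (X x) =
        (fderiv ℝ (fun y => g y (l y) n) x (X x)) • w
          - (fderiv ℝ (fun y => g y (l y) w) x (X x)) • n := by
      rw [hW, fderiv_fun_sub ((hφd x).smul_const w) ((had x).smul_const n),
        fderiv_smul_const (hφd x) w, fderiv_smul_const (had x) n]
      simp
    have hDW' : fderiv ℝ W' x (X x) =
        (fderiv ℝ (fun y => g y (l y) n) x (X x)) • w'
          - (fderiv ℝ (fun y => g y (l y) w') x (X x)) • n := by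
      rw [hW', fderiv_fun_sub ((hφd x).smul_const w') ((ha'd x).smul_const n),
        fderiv_smul_const (hφd x) w', fderiv_smul_const (ha'd x) n]
      simp
    set c : ℝ := fderiv ℝ (fun y => g y (l y) w) x (X x) with hc
    set c' : ℝ := fderiv ℝ (fun y => g y (l y) w') x (X x) with hc'
    set p : ℝ := fderiv ℝ (fun y => g y (l y) n) x (X x) with hp
    have hTww' : T x w w' = 0 := (hT_nil x).2 w w' hw hw'
    rw [hWx, hW'x, hDW, hDW'] at hmain
    simp only [map_sub, map_smul, ContinuousLinearMap.sub_apply,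
      ContinuousLinearMap.smul_apply, smul_eq_mul] at hmain
    rw [hTww'] at hmain
    -- hmain : fderiv T x (X x) w w' + (p * 0 - c * T x n w') + (p * T x w w' ... )
    -- expand c and c'
    have hcval : c = fderiv ℝ g x (X x) (l x) w + g x (fderiv ℝ l x (X x)) w := by
      rw [hc, fderiv_bilin_apply (hgd x) (hld x) (differentiableAt_const w) (X x)]
      simp
    have hc'val : c' = fderiv ℝ g x (X x) (l x) w' + g x (fderiv ℝ l x (X x)) w' := by
      rw [hc', fderiv_bilin_apply (hgd x) (hld x) (differentiableAt_const w') (X x)]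
      simp
    -- nil-Killing condition
    have hK : ∀ z : E, fderiv ℝ g x (X x) (l x) z + g x (fderiv ℝ X x (l x)) z
        + g x (l x) (fderiv ℝ X x z) = 0 := by
      intro z
      have := (hX_nil x).1 z
      rwa [lieDerivSym_apply] at this
    -- g x (Dl (X x)) z = g x (DX (l x)) z + f x * g x (l x) z
    have hDl : ∀ z : E, g x (fderiv ℝ l x (X x)) z
        = g x (fderiv ℝ X x (l x)) z + f x * g x (l x) z := by
      intro z
      have : fderiv ℝ l x (X x) = fderiv ℝ X x (l x) + f x • l x := by
        rw [hbr]; abel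
      rw [this]
      simp [map_add, map_smul]
    have hcancel : c + g x (l x) (fderiv ℝ X x w) = 0 := by
      rw [hcval, hDl w, hw]
      have := hK w
      linarith
    have hcancel' : c' + g x (l x) (fderiv ℝ X x w') = 0 := by
      rw [hc'val, hDl w', hw']
      have := hK w'
      linarith
    rw [lieDerivSym_apply]
    rw [nil_decomp_left (hT_nil x) hn (fderiv ℝ X x w) hw',
      nil_decomp_right (hT_nil x) hn hw (fderiv ℝ X x w')]
    linear_combination hmain + (T x n w') * hcancel + (T x w n) * hcancel'
end

section
/- Let g be a Lorentzian metric on E, l a null vector field, and X, Y vector fields that are nil-Killing with respect to l and satisfy [X,l] = f_1·l and [Y,l] = f_2·l for smooth functions f_1, f_2 : E → ℝ. Then [X,Y] is nil-Killing with respect to l and [[X,Y], l] = (X(f_2) − Y(f_1))·l, where X(f) denotes the directional derivative x ↦ (Df)_x(X(x)). (Hence the set g_l of nil-Killing vector fields X with [X,l] proportional to l is a Lie algebra.) -/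
variable {E : Type*}

/-! ### Auxiliary lemmas -/

section Aux

variable [NormedAddCommGroup E] [NormedSpace ℝ E]

noncomputable instance auxNACG3 : NormedAddCommGroup (E →L[ℝ] E →L[ℝ] E →L[ℝ] ℝ) :=
  ContinuousLinearMap.toNormedAddCommGroup (E := E) (F := E →L[ℝ] E →L[ℝ] ℝ) (σ₁₂ := RingHom.id ℝ)

noncomputable instance auxNS3 : NormedSpace ℝ (E →L[ℝ] E →L[ℝ] E →L[ℝ] ℝ) :=
  ContinuousLinearMap.toNormedSpace (E := E) (F := E →L[ℝ] E →L[ℝ] ℝ) (σ₁₂ := RingHom.id ℝ)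
    (𝕜' := ℝ)

section helpers

variable {M : Type*} [NormedAddCommGroup M] [NormedSpace ℝ M]

lemma aux_fd_apply {F : E → E →L[ℝ] M} {a : E → E} {x : E}
    (hF : DifferentiableAt ℝ F x) (ha : DifferentiableAt ℝ a x) (u : E) :
    fderiv ℝ (fun y => F y (a y)) x u = fderiv ℝ F x u (a x) + F x (fderiv ℝ a x u) := by
  rw [fderiv_clm_apply hF ha]
  simp [ContinuousLinearMap.add_apply, ContinuousLinearMap.flip_apply, add_comm]

lemma aux_fd_apply_const {F : E → E →L[ℝ] M} {x : E}
    (hF : DifferentiableAt ℝ F x) (v u : E) :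
    fderiv ℝ (fun y => F y v) x u = fderiv ℝ F x u v := by
  simpa using aux_fd_apply (a := fun _ => v) hF (differentiableAt_const v) u

lemma aux_fd_apply2 {T : E → E →L[ℝ] E →L[ℝ] M} {a b : E → E} {x : E}
    (hT : DifferentiableAt ℝ T x) (ha : DifferentiableAt ℝ a x)
    (hb : DifferentiableAt ℝ b x) (u : E) :
    fderiv ℝ (fun y => T y (a y) (b y)) x u =
      fderiv ℝ T x u (a x) (b x) + T x (fderiv ℝ a x u) (b x)
        + T x (a x) (fderiv ℝ b x u) := by
  rw [aux_fd_apply (F := fun y => T y (a y)) (a := b) (hT.clm_apply ha) hb u,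
    aux_fd_apply (F := T) (a := a) hT ha u]
  simp [ContinuousLinearMap.add_apply, add_assoc]

lemma aux_fd_apply2_const {T : E → E →L[ℝ] E →L[ℝ] M} {x : E}
    (hT : DifferentiableAt ℝ T x) (v w u : E) :
    fderiv ℝ (fun y => T y v w) x u = fderiv ℝ T x u v w := by
  simpa using aux_fd_apply2 (a := fun _ => v) (b := fun _ => w) hT
    (differentiableAt_const v) (differentiableAt_const w) u

end helpers

lemma lorentz_exists_one {B : E →L[ℝ] E →L[ℝ] ℝ}
    (hB : IsLorentzianForm B) {v : E} (hv : v ≠ 0) : ∃ n : E, B v n = 1 := by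
  obtain ⟨b, hb⟩ := hB
  have hrepr : ∃ j, b.repr v j ≠ 0 := by
    by_contra h
    push_neg at h
    apply hv
    have : b.repr v = 0 := Finsupp.ext h
    simpa using congrArg b.repr.symm this
  obtain ⟨j, hj⟩ := hrepr
  have hBvj : B v (b j) = b.repr v j * (if (j : ℕ) = 0 then (-1 : ℝ) else 1) := by
    conv_lhs => rw [← Module.Basis.sum_repr b v]
    simp only [map_sum, map_smul, ContinuousLinearMap.coe_sum',
      Finset.sum_apply, ContinuousLinearMap.coe_smul', Pi.smul_apply, smul_eq_mul, hb]
    rw [Finset.sum_eq_single j]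
    · simp
    · intro i _ hij; simp [hij]
    · intro h; simp at h
  have hne : B v (b j) ≠ 0 := by
    rw [hBvj]
    split_ifs <;> simpa using hj
  refine ⟨(B v (b j))⁻¹ • b j, ?_⟩
  rw [map_smul]
  simp [inv_mul_cancel₀ hne]

lemma lieDerivSym_diff {g : E → (E →L[ℝ] E →L[ℝ] ℝ)} (hg : ContDiff ℝ (⊤ : ℕ∞) g)
    {Z : E → E} (hZ : ContDiff ℝ (⊤ : ℕ∞) Z) : Differentiable ℝ (lieDerivSym Z g) := by
  have h1 : ContDiff ℝ 1 (fun x => fderiv ℝ g x (Z x)) :=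
    (hg.fderiv_right (m := 1) (WithTop.coe_le_coe.mpr le_top)).clm_apply (hZ.of_le (by simp))
  have h2 : ContDiff ℝ 1 (fun x => (g x).comp (fderiv ℝ Z x)) :=
    ContDiff.clm_comp (hg.of_le (by simp)) (hZ.fderiv_right (m := 1) (WithTop.coe_le_coe.mpr le_top))
  have h3 : ContDiff ℝ 1
      (fun x => ((ContinuousLinearMap.compL ℝ E E ℝ).flip (fderiv ℝ Z x)).comp (g x)) :=
    ContDiff.clm_comp
      (ContDiff.clm_apply contDiff_const (hZ.fderiv_right (m := 1) (WithTop.coe_le_coe.mpr le_top)))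
      (hg.of_le (by simp))
  exact ((h1.add h2).add h3).differentiable one_ne_zero

lemma key_fderiv_lieDeriv {g : E → (E →L[ℝ] E →L[ℝ] ℝ)} (hg : ContDiff ℝ (⊤ : ℕ∞) g)
    {Z : E → E} (hZ : ContDiff ℝ (⊤ : ℕ∞) Z) (x u v w : E) :
    fderiv ℝ (lieDerivSym Z g) x u v w =
      fderiv ℝ (fderiv ℝ g) x u (Z x) v w + fderiv ℝ g x (fderiv ℝ Z x u) v w
      + fderiv ℝ g x u (fderiv ℝ Z x v) w + g x (fderiv ℝ (fderiv ℝ Z) x u v) w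
      + fderiv ℝ g x u v (fderiv ℝ Z x w) + g x v (fderiv ℝ (fderiv ℝ Z) x u w) := by
  have hgd : Differentiable ℝ g := hg.differentiable (by simp)
  have hZd : Differentiable ℝ Z := hZ.differentiable (by simp)
  have hDg : Differentiable ℝ (fderiv ℝ g) :=
    (hg.fderiv_right (m := 1) (WithTop.coe_le_coe.mpr le_top)).differentiable one_ne_zero
  have hDZ : Differentiable ℝ (fderiv ℝ Z) :=
    (hZ.fderiv_right (m := 1) (WithTop.coe_le_coe.mpr le_top)).differentiable one_ne_zero
  have hTd : Differentiable ℝ (lieDerivSym Z g) := lieDerivSym_diff hg hZ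
  rw [← aux_fd_apply2_const (hTd x) v w u]
  have efun : (fun y => lieDerivSym Z g y v w) =
      fun y => fderiv ℝ g y (Z y) v w + g y (fderiv ℝ Z y v) w + g y v (fderiv ℝ Z y w) :=
    funext fun y => lieDerivSym_apply Z g y v w
  rw [efun]
  have d1 : DifferentiableAt ℝ (fun y => fderiv ℝ g y (Z y) v w) x :=
    (((hDg x).clm_apply (hZd x)).clm_apply (differentiableAt_const v)).clm_apply
      (differentiableAt_const w)
  have d2 : DifferentiableAt ℝ (fun y => g y (fderiv ℝ Z y v) w) x :=
    ((hgd x).clm_apply ((hDZ x).clm_apply (differentiableAt_const v))).clm_apply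
      (differentiableAt_const w)
  have d3 : DifferentiableAt ℝ (fun y => g y v (fderiv ℝ Z y w)) x :=
    ((hgd x).clm_apply (differentiableAt_const v)).clm_apply
      ((hDZ x).clm_apply (differentiableAt_const w))
  rw [fderiv_fun_add (d1.fun_add d2) d3, fderiv_fun_add d1 d2]
  have p1 : fderiv ℝ (fun y => fderiv ℝ g y (Z y) v w) x u =
      fderiv ℝ (fderiv ℝ g) x u (Z x) v w + fderiv ℝ g x (fderiv ℝ Z x u) v w := by
    rw [aux_fd_apply2_const (M := ℝ) (T := fun y => fderiv ℝ g y (Z y))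
      ((hDg x).clm_apply (c := fderiv ℝ g) (hZd x)) v w u]
    rw [aux_fd_apply (F := fderiv ℝ g) (hDg x) (hZd x) u]
    simp [ContinuousLinearMap.add_apply]
  have p2 : fderiv ℝ (fun y => g y (fderiv ℝ Z y v) w) x u =
      fderiv ℝ g x u (fderiv ℝ Z x v) w + g x (fderiv ℝ (fderiv ℝ Z) x u v) w := by
    rw [aux_fd_apply2 (T := g) (a := fun y => fderiv ℝ Z y v) (b := fun _ => w)
      (hgd x) ((hDZ x).clm_apply (differentiableAt_const v)) (differentiableAt_const w) u]
    rw [aux_fd_apply_const (hDZ x) v u]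
    simp
  have p3 : fderiv ℝ (fun y => g y v (fderiv ℝ Z y w)) x u =
      fderiv ℝ g x u v (fderiv ℝ Z x w) + g x v (fderiv ℝ (fderiv ℝ Z) x u w) := by
    rw [aux_fd_apply2 (T := g) (a := fun _ => v) (b := fun y => fderiv ℝ Z y w)
      (hgd x) (differentiableAt_const v) ((hDZ x).clm_apply (differentiableAt_const w)) u]
    rw [aux_fd_apply_const (hDZ x) w u]
    simp
  simp only [ContinuousLinearMap.add_apply, p1, p2, p3]
  ring

lemma comm_step {g : E → (E →L[ℝ] E →L[ℝ] ℝ)} (hg : ContDiff ℝ (⊤ : ℕ∞) g)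
    {X Y : E → E} (hX : ContDiff ℝ (⊤ : ℕ∞) X) (hY : ContDiff ℝ (⊤ : ℕ∞) Y) (x v w : E) :
    lieDerivSym (vfLieBracket X Y) g x v w =
      lieDerivSym X (lieDerivSym Y g) x v w - lieDerivSym Y (lieDerivSym X g) x v w := by
  have hgd : Differentiable ℝ g := hg.differentiable (by simp)
  have hXd : Differentiable ℝ X := hX.differentiable (by simp)
  have hYd : Differentiable ℝ Y := hY.differentiable (by simp)
  have hDg : Differentiable ℝ (fderiv ℝ g) :=
    (hg.fderiv_right (m := 1) (WithTop.coe_le_coe.mpr le_top)).differentiable one_ne_zero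
  have hDX : Differentiable ℝ (fderiv ℝ X) :=
    (hX.fderiv_right (m := 1) (WithTop.coe_le_coe.mpr le_top)).differentiable one_ne_zero
  have hDY : Differentiable ℝ (fderiv ℝ Y) :=
    (hY.fderiv_right (m := 1) (WithTop.coe_le_coe.mpr le_top)).differentiable one_ne_zero
  have hBx : vfLieBracket X Y x = fderiv ℝ Y x (X x) - fderiv ℝ X x (Y x) := rfl
  have hDB : ∀ u : E, fderiv ℝ (vfLieBracket X Y) x u =
      fderiv ℝ (fderiv ℝ Y) x u (X x) + fderiv ℝ Y x (fderiv ℝ X x u)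
      - (fderiv ℝ (fderiv ℝ X) x u (Y x) + fderiv ℝ X x (fderiv ℝ Y x u)) := by
    intro u
    have h : vfLieBracket X Y = fun y => fderiv ℝ Y y (X y) - fderiv ℝ X y (Y y) := rfl
    rw [h, fderiv_fun_sub ((hDY x).clm_apply (hXd x)) ((hDX x).clm_apply (hYd x)),
      ContinuousLinearMap.sub_apply, aux_fd_apply (hDY x) (hXd x) u,
      aux_fd_apply (hDX x) (hYd x) u]
  rw [lieDerivSym_apply (vfLieBracket X Y) g x v w,
      lieDerivSym_apply X (lieDerivSym Y g) x v w,
      lieDerivSym_apply Y (lieDerivSym X g) x v w,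
      key_fderiv_lieDeriv hg hY x (X x) v w,
      key_fderiv_lieDeriv hg hX x (Y x) v w,
      lieDerivSym_apply Y g x (fderiv ℝ X x v) w,
      lieDerivSym_apply Y g x v (fderiv ℝ X x w),
      lieDerivSym_apply X g x (fderiv ℝ Y x v) w,
      lieDerivSym_apply X g x v (fderiv ℝ Y x w),
      hBx, hDB v, hDB w]
  simp only [map_sub, map_add, ContinuousLinearMap.sub_apply, ContinuousLinearMap.add_apply]
  have sg : fderiv ℝ (fderiv ℝ g) x (X x) (Y x) = fderiv ℝ (fderiv ℝ g) x (Y x) (X x) :=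
    (hg.contDiffAt.isSymmSndFDerivAt (by rw [minSmoothness_of_isRCLikeNormedField]; exact WithTop.coe_le_coe.mpr le_top)) (X x) (Y x)
  have sY : ∀ a b : E, fderiv ℝ (fderiv ℝ Y) x a b = fderiv ℝ (fderiv ℝ Y) x b a :=
    hY.contDiffAt.isSymmSndFDerivAt (by rw [minSmoothness_of_isRCLikeNormedField]; exact WithTop.coe_le_coe.mpr le_top)
  have sX : ∀ a b : E, fderiv ℝ (fderiv ℝ X) x a b = fderiv ℝ (fderiv ℝ X) x b a :=
    hX.contDiffAt.isSymmSndFDerivAt (by rw [minSmoothness_of_isRCLikeNormedField]; exact WithTop.coe_le_coe.mpr le_top)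
  rw [sY v (X x), sY w (X x), sX v (Y x), sX w (Y x), sg]
  ring

lemma nil_step {g : E → (E →L[ℝ] E →L[ℝ] ℝ)} (hg : ContDiff ℝ (⊤ : ℕ∞) g)
    {l X : E → E} (hl : ContDiff ℝ (⊤ : ℕ∞) l) (hX : ContDiff ℝ (⊤ : ℕ∞) X)
    {f₁ : E → ℝ}
    (hXl : ∀ x, vfLieBracket X l x = f₁ x • l x)
    {T : E → (E →L[ℝ] E →L[ℝ] ℝ)} (hT : Differentiable ℝ T)
    (hTnil : ∀ x, NilpotentWrt (g x) (T x) (l x))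
    (x : E) (hS : ∀ z : E, lieDerivSym X g x (l x) z = 0)
    {n : E} (hn : g x (l x) n = 1) :
    NilpotentWrt (g x) (lieDerivSym X T x) (l x) := by
  have hgd : Differentiable ℝ g := hg.differentiable (by simp)
  have hld : Differentiable ℝ l := hl.differentiable (by simp)
  have hXd : Differentiable ℝ X := hX.differentiable (by simp)
  have hDlX : fderiv ℝ l x (X x) = fderiv ℝ X x (l x) + f₁ x • l x := by
    have h := hXl x
    simp only [vfLieBracket] at h
    rw [sub_eq_iff_eq_add] at h
    rw [h, add_comm]
  constructor
  · -- part (i)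
    intro z
    have hψ : (fun y => T y (l y) z) = fun _ => (0 : ℝ) :=
      funext fun y => (hTnil y).1 z
    have h1 : fderiv ℝ T x (X x) (l x) z = - T x (fderiv ℝ l x (X x)) z := by
      have h0 : fderiv ℝ (fun y => T y (l y) z) x (X x) = 0 := by
        rw [hψ]; simp
      have hexp := aux_fd_apply2 (a := l) (b := fun _ => z) (hT x) (hld x)
        (differentiableAt_const z) (X x)
      simp only [fderiv_fun_const, fderiv_const, Pi.zero_apply, ContinuousLinearMap.zero_apply,
        map_zero, add_zero] at hexp
      rw [hexp] at h0
      linarith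
    rw [lieDerivSym_apply, h1, hDlX]
    have e1 : T x (l x) z = 0 := (hTnil x).1 z
    have e2 : T x (l x) (fderiv ℝ X x z) = 0 := (hTnil x).1 _
    simp [map_add, map_smul, ContinuousLinearMap.add_apply,
      ContinuousLinearMap.smul_apply, e1, e2]
  · -- part (ii)
    intro w w' hw hw'
    set c₁ : E → ℝ := fun y => g y (l y) w with hc₁def
    set c₂ : E → ℝ := fun y => g y (l y) w' with hc₂def
    set d : E → ℝ := fun y => g y (l y) n with hddef
    have hc₁ : Differentiable ℝ c₁ := (hgd.clm_apply hld).clm_apply (differentiable_const w)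
    have hc₂ : Differentiable ℝ c₂ := (hgd.clm_apply hld).clm_apply (differentiable_const w')
    have hd : Differentiable ℝ d := (hgd.clm_apply hld).clm_apply (differentiable_const n)
    set W₁ : E → E := fun y => d y • w - c₁ y • n with hW₁def
    set W₂ : E → E := fun y => d y • w' - c₂ y • n with hW₂def
    have hW₁d : Differentiable ℝ W₁ := (hd.smul_const w).sub (hc₁.smul_const n)
    have hW₂d : Differentiable ℝ W₂ := (hd.smul_const w').sub (hc₂.smul_const n)
    have hGW₁ : ∀ y, g y (l y) (W₁ y) = 0 := by
      intro y; simp only [hW₁def, map_sub, map_smul, smul_eq_mul, hc₁def, hddef]; ring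
    have hGW₂ : ∀ y, g y (l y) (W₂ y) = 0 := by
      intro y; simp only [hW₂def, map_sub, map_smul, smul_eq_mul, hc₂def, hddef]; ring
    have hφ : (fun y => T y (W₁ y) (W₂ y)) = fun _ => (0 : ℝ) :=
      funext fun y => (hTnil y).2 _ _ (hGW₁ y) (hGW₂ y)
    have hW₁x : W₁ x = w := by
      simp only [hW₁def]
      have h1 : c₁ x = 0 := hw
      rw [h1]
      have h2 : d x = 1 := hn
      rw [h2]; simp
    have hW₂x : W₂ x = w' := by
      simp only [hW₂def]
      have h1 : c₂ x = 0 := hw'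
      rw [h1]
      have h2 : d x = 1 := hn
      rw [h2]; simp
    have hDW₁ : fderiv ℝ W₁ x (X x) =
        (fderiv ℝ d x (X x)) • w - (fderiv ℝ c₁ x (X x)) • n := by
      rw [hW₁def]
      rw [fderiv_fun_sub ((hd x).smul_const w) ((hc₁ x).smul_const n)]
      rw [fderiv_smul_const (hd x) w, fderiv_smul_const (hc₁ x) n]
      simp
    have hDW₂ : fderiv ℝ W₂ x (X x) =
        (fderiv ℝ d x (X x)) • w' - (fderiv ℝ c₂ x (X x)) • n := by
      rw [hW₂def]
      rw [fderiv_fun_sub ((hd x).smul_const w') ((hc₂ x).smul_const n)]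
      rw [fderiv_smul_const (hd x) w', fderiv_smul_const (hc₂ x) n]
      simp
    have hTww' : T x w w' = 0 := (hTnil x).2 w w' hw hw'
    have heq1 : fderiv ℝ T x (X x) w w' =
        (fderiv ℝ c₁ x (X x)) * T x n w' + (fderiv ℝ c₂ x (X x)) * T x w n := by
      have h0 : fderiv ℝ (fun y => T y (W₁ y) (W₂ y)) x (X x) = 0 := by
        rw [hφ]; simp
      have hexp := aux_fd_apply2 (a := W₁) (b := W₂) (hT x) (hW₁d x) (hW₂d x) (X x)
      rw [hexp, hW₁x, hW₂x, hDW₁, hDW₂] at h0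
      have hA : T x ((fderiv ℝ d x (X x)) • w - (fderiv ℝ c₁ x (X x)) • n) w' =
          (fderiv ℝ d x (X x)) * T x w w' - (fderiv ℝ c₁ x (X x)) * T x n w' := by
        simp [map_sub, map_smul]
      have hB : T x w ((fderiv ℝ d x (X x)) • w' - (fderiv ℝ c₂ x (X x)) • n) =
          (fderiv ℝ d x (X x)) * T x w w' - (fderiv ℝ c₂ x (X x)) * T x w n := by
        simp [map_sub, map_smul]
      rw [hA, hB, hTww'] at h0
      linarith
    have hDc₁ : fderiv ℝ c₁ x (X x) =
        fderiv ℝ g x (X x) (l x) w + g x (fderiv ℝ l x (X x)) w := by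
      have h := aux_fd_apply2 (T := g) (a := l) (b := fun _ => w) (hgd x) (hld x)
        (differentiableAt_const w) (X x)
      simp only [fderiv_fun_const, fderiv_const, Pi.zero_apply, ContinuousLinearMap.zero_apply,
        map_zero, add_zero] at h
      exact h
    have hDc₂ : fderiv ℝ c₂ x (X x) =
        fderiv ℝ g x (X x) (l x) w' + g x (fderiv ℝ l x (X x)) w' := by
      have h := aux_fd_apply2 (T := g) (a := l) (b := fun _ => w') (hgd x) (hld x)
        (differentiableAt_const w') (X x)
      simp only [fderiv_fun_const, fderiv_const, Pi.zero_apply, ContinuousLinearMap.zero_apply,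
        map_zero, add_zero] at h
      exact h
    have hkey₁ : fderiv ℝ c₁ x (X x) + g x (l x) (fderiv ℝ X x w) = 0 := by
      have hSw := hS w
      rw [lieDerivSym_apply] at hSw
      rw [hDc₁, hDlX]
      simp only [map_add, map_smul, ContinuousLinearMap.add_apply,
        ContinuousLinearMap.smul_apply, smul_eq_mul]
      have h1 : g x (l x) w = 0 := hw
      rw [h1]
      linarith
    have hkey₂ : fderiv ℝ c₂ x (X x) + g x (l x) (fderiv ℝ X x w') = 0 := by
      have hSw := hS w'
      rw [lieDerivSym_apply] at hSw
      rw [hDc₂, hDlX]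
      simp only [map_add, map_smul, ContinuousLinearMap.add_apply,
        ContinuousLinearMap.smul_apply, smul_eq_mul]
      have h1 : g x (l x) w' = 0 := hw'
      rw [h1]
      linarith
    have ha1 : T x (fderiv ℝ X x w) w' = g x (l x) (fderiv ℝ X x w) * T x n w' := by
      have hperp : g x (l x) (fderiv ℝ X x w - g x (l x) (fderiv ℝ X x w) • n) = 0 := by
        simp [map_sub, map_smul, hn]
      have h0 : T x (fderiv ℝ X x w - g x (l x) (fderiv ℝ X x w) • n) w' = 0 :=
        (hTnil x).2 _ _ hperp hw'
      have h2 : T x (fderiv ℝ X x w) w' =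
          T x (fderiv ℝ X x w - g x (l x) (fderiv ℝ X x w) • n) w'
            + g x (l x) (fderiv ℝ X x w) * T x n w' := by
        simp [map_sub, map_smul]
      rw [h2, h0]; ring
    have ha2 : T x w (fderiv ℝ X x w') = g x (l x) (fderiv ℝ X x w') * T x w n := by
      have hperp : g x (l x) (fderiv ℝ X x w' - g x (l x) (fderiv ℝ X x w') • n) = 0 := by
        simp [map_sub, map_smul, hn]
      have h0 : T x w (fderiv ℝ X x w' - g x (l x) (fderiv ℝ X x w') • n) = 0 :=
        (hTnil x).2 _ _ hw hperp
      have h2 : T x w (fderiv ℝ X x w') =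
          T x w (fderiv ℝ X x w' - g x (l x) (fderiv ℝ X x w') • n)
            + g x (l x) (fderiv ℝ X x w') * T x w n := by
        simp [map_sub, map_smul]
      rw [h2, h0]; ring
    rw [lieDerivSym_apply, heq1, ha1, ha2]
    have e1 : fderiv ℝ c₁ x (X x) = - g x (l x) (fderiv ℝ X x w) := by linarith
    have e2 : fderiv ℝ c₂ x (X x) = - g x (l x) (fderiv ℝ X x w') := by linarith
    rw [e1, e2]; ring

lemma bracket_step {l X Y : E → E} (hl : ContDiff ℝ (⊤ : ℕ∞) l) (hX : ContDiff ℝ (⊤ : ℕ∞) X)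
    (hY : ContDiff ℝ (⊤ : ℕ∞) Y) {f₁ f₂ : E → ℝ}
    (hf₁ : ContDiff ℝ (⊤ : ℕ∞) f₁) (hf₂ : ContDiff ℝ (⊤ : ℕ∞) f₂)
    (hXl : ∀ x, vfLieBracket X l x = f₁ x • l x)
    (hYl : ∀ x, vfLieBracket Y l x = f₂ x • l x) (x : E) :
    vfLieBracket (vfLieBracket X Y) l x =
      (fderiv ℝ f₂ x (X x) - fderiv ℝ f₁ x (Y x)) • l x := by
  have hld : Differentiable ℝ l := hl.differentiable (by simp)
  have hXd : Differentiable ℝ X := hX.differentiable (by simp)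
  have hYd : Differentiable ℝ Y := hY.differentiable (by simp)
  have hf₁d : Differentiable ℝ f₁ := hf₁.differentiable (by simp)
  have hf₂d : Differentiable ℝ f₂ := hf₂.differentiable (by simp)
  have hDl : Differentiable ℝ (fderiv ℝ l) :=
    (hl.fderiv_right (m := 1) (WithTop.coe_le_coe.mpr le_top)).differentiable one_ne_zero
  have hDX : Differentiable ℝ (fderiv ℝ X) :=
    (hX.fderiv_right (m := 1) (WithTop.coe_le_coe.mpr le_top)).differentiable one_ne_zero
  have hDY : Differentiable ℝ (fderiv ℝ Y) :=
    (hY.fderiv_right (m := 1) (WithTop.coe_le_coe.mpr le_top)).differentiable one_ne_zero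
  have hDlX : fderiv ℝ l x (X x) = fderiv ℝ X x (l x) + f₁ x • l x := by
    have h := hXl x; simp only [vfLieBracket] at h
    rw [sub_eq_iff_eq_add] at h; rw [h, add_comm]
  have hDlY : fderiv ℝ l x (Y x) = fderiv ℝ Y x (l x) + f₂ x • l x := by
    have h := hYl x; simp only [vfLieBracket] at h
    rw [sub_eq_iff_eq_add] at h; rw [h, add_comm]
  have mk_eq : ∀ (Z : E → E) (f : E → ℝ), Differentiable ℝ Z →
      Differentiable ℝ (fderiv ℝ Z) → Differentiable ℝ f →
      (∀ y, vfLieBracket Z l y = f y • l y) → ∀ u : E,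
      fderiv ℝ (fderiv ℝ l) x u (Z x) + fderiv ℝ l x (fderiv ℝ Z x u)
        - (fderiv ℝ (fderiv ℝ Z) x u (l x) + fderiv ℝ Z x (fderiv ℝ l x u))
      = fderiv ℝ f x u • l x + f x • fderiv ℝ l x u := by
    intro Z f hZd hDZ hfd hb u
    have hfun : (fun y => fderiv ℝ l y (Z y) - fderiv ℝ Z y (l y)) =
        (fun y => f y • l y) := funext fun y => hb y
    have hlhs : fderiv ℝ (fun y => fderiv ℝ l y (Z y) - fderiv ℝ Z y (l y)) x u
        = fderiv ℝ (fderiv ℝ l) x u (Z x) + fderiv ℝ l x (fderiv ℝ Z x u)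
          - (fderiv ℝ (fderiv ℝ Z) x u (l x) + fderiv ℝ Z x (fderiv ℝ l x u)) := by
      rw [fderiv_fun_sub ((hDl x).clm_apply (hZd x)) ((hDZ x).clm_apply (hld x))]
      rw [ContinuousLinearMap.sub_apply,
        aux_fd_apply (hDl x) (hZd x) u, aux_fd_apply (hDZ x) (hld x) u]
    have hrhs : fderiv ℝ (fun y => f y • l y) x u
        = f x • fderiv ℝ l x u + fderiv ℝ f x u • l x := by
      rw [fderiv_fun_smul (hfd x) (hld x)]
      simp [ContinuousLinearMap.add_apply, ContinuousLinearMap.smul_apply]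
    rw [← hlhs, hfun, hrhs]; abel
  have E1 := mk_eq X f₁ hXd hDX hf₁d hXl (Y x)
  have E2 := mk_eq Y f₂ hYd hDY hf₂d hYl (X x)
  have s1 : fderiv ℝ (fderiv ℝ l) x (Y x) (X x) = fderiv ℝ (fderiv ℝ l) x (X x) (Y x) :=
    (hl.contDiffAt.isSymmSndFDerivAt (by rw [minSmoothness_of_isRCLikeNormedField]; exact WithTop.coe_le_coe.mpr le_top)) (Y x) (X x)
  have s2 : fderiv ℝ (fderiv ℝ Y) x (X x) (l x) = fderiv ℝ (fderiv ℝ Y) x (l x) (X x) :=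
    (hY.contDiffAt.isSymmSndFDerivAt (by rw [minSmoothness_of_isRCLikeNormedField]; exact WithTop.coe_le_coe.mpr le_top)) (X x) (l x)
  have s3 : fderiv ℝ (fderiv ℝ X) x (Y x) (l x) = fderiv ℝ (fderiv ℝ X) x (l x) (Y x) :=
    (hX.contDiffAt.isSymmSndFDerivAt (by rw [minSmoothness_of_isRCLikeNormedField]; exact WithTop.coe_le_coe.mpr le_top)) (Y x) (l x)
  rw [s2] at E2
  rw [s1, s3] at E1
  rw [hDlX] at E2
  rw [hDlY] at E1
  simp only [map_add, map_smul, smul_add, smul_smul] at E1 E2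
  show fderiv ℝ l x (vfLieBracket X Y x)
      - fderiv ℝ (vfLieBracket X Y) x (l x) = _
  have hBx : vfLieBracket X Y x = fderiv ℝ Y x (X x) - fderiv ℝ X x (Y x) := rfl
  have hDB : fderiv ℝ (vfLieBracket X Y) x (l x)
      = fderiv ℝ (fderiv ℝ Y) x (l x) (X x) + fderiv ℝ Y x (fderiv ℝ X x (l x))
        - (fderiv ℝ (fderiv ℝ X) x (l x) (Y x) + fderiv ℝ X x (fderiv ℝ Y x (l x))) := by
    have h : vfLieBracket X Y = fun y => fderiv ℝ Y y (X y) - fderiv ℝ X y (Y y) := rfl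
    rw [h, fderiv_fun_sub ((hDY x).clm_apply (hXd x)) ((hDX x).clm_apply (hYd x)),
      ContinuousLinearMap.sub_apply, aux_fd_apply (hDY x) (hXd x) (l x),
      aux_fd_apply (hDX x) (hYd x) (l x)]
  rw [hBx, hDB, map_sub]
  linear_combination (norm := module) E2 - E1

end Aux

/-- If `X, Y` are nil-Killing with respect to the null vector field `l` with
`[X,l] = f₁ • l` and `[Y,l] = f₂ • l`, then `[X,Y]` is nil-Killing with respect to `l` and
`[[X,Y], l] = (X f₂ - Y f₁) • l`.  (Hence the nil-Killing fields with `[X,l] ∝ l` form a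
Lie algebra.) -/
theorem stmt14 [NormedAddCommGroup E] [NormedSpace ℝ E] [FiniteDimensional ℝ E]
    (g : E → (E →L[ℝ] E →L[ℝ] ℝ)) (hg : ContDiff ℝ (⊤ : ℕ∞) g)
    (hg_symm : ∀ (x v w : E), g x v w = g x w v)
    (hg_lor : ∀ x : E, IsLorentzianForm (g x))
    (l : E → E) (hl : ContDiff ℝ (⊤ : ℕ∞) l)
    (hl_null : ∀ x : E, l x ≠ 0 ∧ g x (l x) (l x) = 0)
    (X Y : E → E) (hX : ContDiff ℝ (⊤ : ℕ∞) X) (hY : ContDiff ℝ (⊤ : ℕ∞) Y)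
    (hX_nil : ∀ x : E, NilpotentWrt (g x) (lieDerivSym X g x) (l x))
    (hY_nil : ∀ x : E, NilpotentWrt (g x) (lieDerivSym Y g x) (l x))
    (f₁ f₂ : E → ℝ) (hf₁ : ContDiff ℝ (⊤ : ℕ∞) f₁) (hf₂ : ContDiff ℝ (⊤ : ℕ∞) f₂)
    (hXl : ∀ x : E, vfLieBracket X l x = f₁ x • l x)
    (hYl : ∀ x : E, vfLieBracket Y l x = f₂ x • l x) :
    (∀ x : E, NilpotentWrt (g x) (lieDerivSym (vfLieBracket X Y) g x) (l x)) ∧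
      (∀ x : E, vfLieBracket (vfLieBracket X Y) l x =
        (fderiv ℝ f₂ x (X x) - fderiv ℝ f₁ x (Y x)) • l x) := by
  constructor
  · intro x
    obtain ⟨n, hn⟩ := lorentz_exists_one (hg_lor x) (hl_null x).1
    have hTd : Differentiable ℝ (lieDerivSym Y g) := lieDerivSym_diff hg hY
    have hSd : Differentiable ℝ (lieDerivSym X g) := lieDerivSym_diff hg hX
    have hNX : NilpotentWrt (g x) (lieDerivSym X (lieDerivSym Y g) x) (l x) :=
      nil_step hg hl hX hXl hTd hY_nil x (hX_nil x).1 hn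
    have hNY : NilpotentWrt (g x) (lieDerivSym Y (lieDerivSym X g) x) (l x) :=
      nil_step hg hl hY hYl hSd hX_nil x (hY_nil x).1 hn
    constructor
    · intro z
      rw [comm_step hg hX hY x (l x) z, hNX.1 z, hNY.1 z]
      ring
    · intro w w' hw hw'
      rw [comm_step hg hX hY x w w', hNX.2 w w' hw hw', hNY.2 w w' hw hw']
      ring
  · intro x
    exact bracket_step hl hX hY hf₁ hf₂ hXl hYl x
end

section
/- Let g be a Lorentzian metric on E and l a null vector field such that {l}⊥ is integrable, i.e. for all vector fields W, W' with g_x(l(x),W(x)) = 0 = g_x(l(x),W'(x)) for all x, one has g_x(l(x), [W,W'](x)) = 0 for all x. If Z is nil-Killing with respect to l and g_x(l(x), Z(x)) = 0 for all x, then for every x ∈ E the vector [Z,l](x) lies in the line spanned by l(x). -/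
variable {E : Type*}

theorem lor_nondeg [NormedAddCommGroup E] [NormedSpace ℝ E] [FiniteDimensional ℝ E]
    (B : E →L[ℝ] E →L[ℝ] ℝ) (hB : IsLorentzianForm B) (v : E)
    (hv : ∀ u : E, B u v = 0) : v = 0 := by
  obtain ⟨b, hb⟩ := hB
  have h1 : ∀ j, b.repr v j = 0 := by
    intro j
    have h2 : B (b j) v = 0 := hv (b j)
    rw [← b.sum_repr v, map_sum] at h2
    simp only [map_smul, smul_eq_mul, hb] at h2
    rw [Finset.sum_eq_single j] at h2
    · rcases eq_or_ne (j : ℕ) 0 with h | h <;> simp [h] at h2 <;> linarith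
    · intro i _ hij; simp [Ne.symm hij]
    · intro h; simp at h
  have : b.repr v = 0 := by ext j; simp [h1 j]
  simpa using congrArg b.repr.symm this

/-- Suppose `{l}⊥` is integrable (the bracket of any two smooth vector fields
orthogonal to `l` is again orthogonal to `l`).  If `Z` is nil-Killing with respect to `l`
and `Z ⊥ l`, then `[Z,l] x` lies in the line spanned by `l x` for every `x`. -/
theorem stmt16 [NormedAddCommGroup E] [NormedSpace ℝ E] [FiniteDimensional ℝ E]
    (g : E → (E →L[ℝ] E →L[ℝ] ℝ)) (hg : ContDiff ℝ (⊤ : ℕ∞) g)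
    (hg_symm : ∀ (x v w : E), g x v w = g x w v)
    (hg_lor : ∀ x : E, IsLorentzianForm (g x))
    (l : E → E) (hl : ContDiff ℝ (⊤ : ℕ∞) l)
    (hl_null : ∀ x : E, l x ≠ 0 ∧ g x (l x) (l x) = 0)
    (h_int : ∀ W W' : E → E, ContDiff ℝ (⊤ : ℕ∞) W → ContDiff ℝ (⊤ : ℕ∞) W' →
      (∀ x : E, g x (l x) (W x) = 0) → (∀ x : E, g x (l x) (W' x) = 0) →
      ∀ x : E, g x (l x) (vfLieBracket W W' x) = 0)
    (Z : E → E) (hZ : ContDiff ℝ (⊤ : ℕ∞) Z)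
    (hZ_nil : ∀ x : E, NilpotentWrt (g x) (lieDerivSym Z g x) (l x))
    (hZ_perp : ∀ x : E, g x (l x) (Z x) = 0) :
    ∀ x : E, ∃ c : ℝ, vfLieBracket Z l x = c • l x := by
  intro x₀
  set v : E := vfLieBracket Z l x₀ with hv_def
  -- the functional g x (l x) is nonzero at every point
  have hlnz : ∀ x : E, ∃ u : E, g x (l x) u ≠ 0 := by
    intro x
    by_contra h
    push_neg at h
    exact (hl_null x).1 (lor_nondeg (g x) (hg_lor x) (l x)
      (fun u => (hg_symm x u (l x)).symm ▸ (hg_symm x (l x) u ▸ h u)))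
  -- key claim: v is g-orthogonal to every vector orthogonal to l x₀
  -- smoothness of the functional y ↦ g y (l y)
  have hGl : ContDiff ℝ (⊤ : ℕ∞) (fun y => g y (l y)) := hg.clm_apply hl
  -- auxiliary vector field n with g y (l y) (n y) > 0 everywhere
  set b : Module.Basis (Fin (Module.finrank ℝ E)) ℝ E := Module.finBasis ℝ E with hb_def
  set nf : E → E := fun y => ∑ i, (g y (l y) (b i)) • b i with hnf_def
  have hnf : ContDiff ℝ (⊤ : ℕ∞) nf := by
    apply ContDiff.sum
    intro i _
    exact (hGl.clm_apply contDiff_const).smul contDiff_const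
  set d : E → ℝ := fun y => g y (l y) (nf y) with hd_def
  have hd_eq : ∀ y, d y = ∑ i, (g y (l y) (b i))^2 := by
    intro y
    simp only [hd_def, hnf_def, map_sum, map_smul, smul_eq_mul]
    exact Finset.sum_congr rfl fun i _ => (sq _).symm
  have hd_ne : ∀ y, d y ≠ 0 := by
    intro y hy
    rw [hd_eq y] at hy
    have hall : ∀ i, g y (l y) (b i) = 0 := by
      intro i
      have := (Finset.sum_eq_zero_iff_of_nonneg
        (fun i _ => sq_nonneg (g y (l y) (b i)))).mp hy i (Finset.mem_univ i)
      exact pow_eq_zero_iff two_ne_zero |>.mp this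
    have hzero : ∀ u : E, g y (l y) u = 0 := by
      intro u
      rw [← b.sum_repr u, map_sum]
      simp [hall]
    obtain ⟨u, hu⟩ := hlnz y
    exact hu (hzero u)
  have hd : ContDiff ℝ (⊤ : ℕ∞) d := hGl.clm_apply hnf
  have key : ∀ w : E, g x₀ (l x₀) w = 0 → g x₀ v w = 0 := by
    intro w hw
    -- vector field W orthogonal to l with W x₀ = w
    set W : E → E := fun y => w - ((g y (l y) w) / d y) • nf y with hW_def
    have hW : ContDiff ℝ (⊤ : ℕ∞) W :=
      contDiff_const.sub (((hGl.clm_apply contDiff_const).div hd hd_ne).smul hnf)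
    have hWl : ∀ y, g y (l y) (W y) = 0 := by
      intro y
      simp only [hW_def, map_sub, map_smul, smul_eq_mul]
      rw [div_mul_cancel₀ _ (hd_ne y)]
      ring
    have hWx₀ : W x₀ = w := by
      simp [hW_def, hw]
    -- differentiability facts at x₀
    have hgd : HasFDerivAt g (fderiv ℝ g x₀) x₀ :=
      (hg.differentiable (by simp) x₀).hasFDerivAt
    have hld : HasFDerivAt l (fderiv ℝ l x₀) x₀ :=
      (hl.differentiable (by simp) x₀).hasFDerivAt
    have hWd : HasFDerivAt W (fderiv ℝ W x₀) x₀ :=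
      (hW.differentiable (by simp) x₀).hasFDerivAt
    -- derivative of the identically-zero function y ↦ g y (l y) (W y)
    have hGd : HasFDerivAt (fun y => g y (l y))
        ((g x₀).comp (fderiv ℝ l x₀) + (fderiv ℝ g x₀).flip (l x₀)) x₀ :=
      hgd.clm_apply hld
    have hFd : HasFDerivAt (fun y => g y (l y) (W y))
        (((fun y => g y (l y)) x₀).comp (fderiv ℝ W x₀)
          + ((g x₀).comp (fderiv ℝ l x₀) + (fderiv ℝ g x₀).flip (l x₀)).flip (W x₀)) x₀ :=
      hGd.clm_apply hWd
    have hF0 : HasFDerivAt (fun y => g y (l y) (W y)) (0 : E →L[ℝ] ℝ) x₀ := by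
      have : (fun y => g y (l y) (W y)) = fun _ => (0:ℝ) := funext hWl
      rw [this]
      exact hasFDerivAt_const 0 x₀
    have hder : (((fun y => g y (l y)) x₀).comp (fderiv ℝ W x₀)
          + ((g x₀).comp (fderiv ℝ l x₀) + (fderiv ℝ g x₀).flip (l x₀)).flip (W x₀)) = 0 :=
      hFd.unique hF0
    have claim1 : fderiv ℝ g x₀ (Z x₀) (l x₀) (W x₀)
        + g x₀ (fderiv ℝ l x₀ (Z x₀)) (W x₀)
        + g x₀ (l x₀) (fderiv ℝ W x₀ (Z x₀)) = 0 := by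
      have := congrFun (congrArg DFunLike.coe hder) (Z x₀)
      simp only [ContinuousLinearMap.add_apply, ContinuousLinearMap.coe_comp',
        Function.comp_apply, ContinuousLinearMap.flip_apply,
        ContinuousLinearMap.zero_apply] at this
      linarith
    -- nil-Killing at x₀ evaluated at (l x₀, W x₀)
    have claim2 : fderiv ℝ g x₀ (Z x₀) (l x₀) (W x₀)
        + g x₀ (fderiv ℝ Z x₀ (l x₀)) (W x₀)
        + g x₀ (l x₀) (fderiv ℝ Z x₀ (W x₀)) = 0 := by
      have h := (hZ_nil x₀).1 (W x₀)
      simp only [lieDerivSym, ContinuousLinearMap.add_apply, ContinuousLinearMap.coe_comp',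
        Function.comp_apply, ContinuousLinearMap.flip_apply,
        ContinuousLinearMap.compL_apply] at h
      linarith
    -- integrability applied to Z and W
    have claim3 : g x₀ (l x₀) (fderiv ℝ W x₀ (Z x₀))
        - g x₀ (l x₀) (fderiv ℝ Z x₀ (W x₀)) = 0 := by
      have h := h_int Z W hZ hW hZ_perp hWl x₀
      simp only [vfLieBracket, map_sub] at h
      linarith [h]
    -- combine
    have hvw : g x₀ (fderiv ℝ l x₀ (Z x₀)) (W x₀)
        - g x₀ (fderiv ℝ Z x₀ (l x₀)) (W x₀) = 0 := by linarith
    rw [hWx₀] at hvw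
    simp only [hv_def, vfLieBracket, map_sub, ContinuousLinearMap.sub_apply]
    linarith
  -- conclude v ∈ span (l x₀)
  obtain ⟨n₀, hn₀⟩ := hlnz x₀
  set s : ℝ := g x₀ (l x₀) n₀ with hs
  refine ⟨g x₀ n₀ v / s, ?_⟩
  have hz : v - (g x₀ n₀ v / s) • l x₀ = 0 := by
    apply lor_nondeg (g x₀) (hg_lor x₀)
    intro u
    set t : ℝ := g x₀ (l x₀) u / s with ht
    have hu0 : g x₀ (l x₀) (u - t • n₀) = 0 := by
      simp [ht, map_sub, map_smul]
      field_simp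
      simp [hs]
    ring_nf
    have h1 : g x₀ (u - t • n₀) v = 0 := by
      rw [hg_symm]; exact key _ hu0
    have h2 : g x₀ u v = t * g x₀ n₀ v := by
      have := h1
      simp [map_sub, map_smul, sub_eq_zero] at this
      simpa using this
    have h3 : g x₀ u (l x₀) = t * s := by
      rw [hg_symm, ht]
      field_simp
    simp only [map_sub, ContinuousLinearMap.sub_apply, map_smul,
      ContinuousLinearMap.smul_apply, smul_eq_mul, h2, h3]
    field_simp
    ring
  exact sub_eq_zero.mp hz
end
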